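/- arXiv:2110.01505 — 11 statements merged into one kernel-verified Lean document; each statement's English description precedes it below -/
import Mathlib

section
/- Suppose R0 > 1. Then the triple E* = (S*, Im*, Is*) with S* = (μ+β+ρ)/σm, Im* = μ(R0−1)/σm, Is* = μβ(R0−1)/(σm(μ+r)) satisfies S* > 0, Im* > 0, Is* > 0 and the sub-capacity equilibrium equations A − σm·S*·Im* − μ·S* = 0, σm·S*·Im* − (μ+β+ρ)·Im* = 0, β·Im* − (μ+r)·Is* = 0; it is the unique solution of these equations with S > 0 and Im > 0; and it satisfies Is* ≤ C_I if and only if R0 ≤ 1 + σm(μ+r)C_I/(μβ). -/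
/-!
The second equation forces `σm S = μ + β + ρ` once `Im ≠ 0`; substituting into the first
determines `Im`, and the third determines `Is` linearly from `Im`. The capacity condition is the
inequality `Is* ≤ C_I` solved for `R0`.
-/

section EndemicEquilibrium

variable {K : Type*} [Field K] {A μ κ σm S Im : K}

theorem susceptible_eq_of_infected_ne_zero (hσm : σm ≠ 0) (hIm : Im ≠ 0)
    (h : σm * S * Im - κ * Im = 0) : S = κ / σm := by
  rw [eq_div_iff hσm]
  exact mul_right_cancel₀ hIm (by linear_combination h)

theorem infected_eq_of_susceptible_eq (hμ : μ ≠ 0) (hκ : κ ≠ 0) (hσm : σm ≠ 0)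
    (hS : S = κ / σm) (h : A - σm * S * Im - μ * S = 0) :
    Im = μ * (A * σm / (μ * κ) - 1) / σm := by
  subst hS
  field_simp at h ⊢
  linear_combination -h

theorem susceptible_balance (hμ : μ ≠ 0) (hκ : κ ≠ 0) (hσm : σm ≠ 0) :
    A - σm * (κ / σm) * (μ * (A * σm / (μ * κ) - 1) / σm) - μ * (κ / σm) = 0 := by
  field_simp
  ring

end EndemicEquilibrium

theorem mul_sub_mul_eq_zero_iff_eq_div {K : Type*} [Field K] {a b c x : K} (hc : c ≠ 0) :
    a * b - c * x = 0 ↔ x = a * b / c := by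
  rw [eq_div_iff hc, sub_eq_zero, mul_comm x, eq_comm]

theorem mul_sub_div_le_iff_le_add_div {K : Type*} [Field K] [LinearOrder K]
    [IsStrictOrderedRing K] {a c d x y : K} (hc : 0 < c) (hd : 0 < d) :
    c * (x - a) / d ≤ y ↔ x ≤ a + d * y / c := by
  rw [div_le_iff₀ hd, mul_comm y, ← le_div_iff₀' hc, sub_le_iff_le_add']

theorem stmt0_general (A μ ρ r β σm CI : ℝ)
    (hμ : 0 < μ) (hρ : 0 < ρ) (hr : 0 < r) (hβ : 0 < β)
    (hσm : 0 < σm)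
    (R0 : ℝ) (hR0 : R0 = A * σm / (μ * (μ + β + ρ)))
    (hR0gt : 1 < R0)
    (Sstar Imstar Isstar : ℝ)
    (hS : Sstar = (μ + β + ρ) / σm)
    (hIm : Imstar = μ * (R0 - 1) / σm)
    (hIs : Isstar = μ * β * (R0 - 1) / (σm * (μ + r))) :
    0 < Sstar ∧ 0 < Imstar ∧ 0 < Isstar ∧
    A - σm * Sstar * Imstar - μ * Sstar = 0 ∧
    σm * Sstar * Imstar - (μ + β + ρ) * Imstar = 0 ∧
    β * Imstar - (μ + r) * Isstar = 0 ∧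
    (∀ S Im Is : ℝ, 0 < S → 0 < Im →
      A - σm * S * Im - μ * S = 0 →
      σm * S * Im - (μ + β + ρ) * Im = 0 →
      β * Im - (μ + r) * Is = 0 →
      S = Sstar ∧ Im = Imstar ∧ Is = Isstar) ∧
    (Isstar ≤ CI ↔ R0 ≤ 1 + σm * (μ + r) * CI / (μ * β)) := by
  have hκ : 0 < μ + β + ρ := by positivity
  have hμr : 0 < μ + r := by positivity
  have hR1 : 0 < R0 - 1 := sub_pos.mpr hR0gt
  have hIsIm : Isstar = β * Imstar / (μ + r) := by rw [hIs, hIm]; field_simp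
  refine ⟨hS ▸ by positivity, hIm ▸ by positivity, hIs ▸ by positivity, ?_, ?_,
    (mul_sub_mul_eq_zero_iff_eq_div hμr.ne').mpr hIsIm, ?_, ?_⟩
  · rw [hS, hIm, hR0]; exact susceptible_balance hμ.ne' hκ.ne' hσm.ne'
  · rw [hS]; field_simp; ring
  · intro S Im Is _ hImpos h1 h2 h3
    have hSeq := susceptible_eq_of_infected_ne_zero hσm.ne' hImpos.ne' h2
    have hImeq := hR0 ▸ infected_eq_of_susceptible_eq hμ.ne' hκ.ne' hσm.ne' hSeq h1
    refine ⟨hSeq.trans hS.symm, hImeq.trans hIm.symm, ?_⟩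
    rw [(mul_sub_mul_eq_zero_iff_eq_div hμr.ne').mp h3, hIsIm, hImeq, hIm]
  · rw [hIs, mul_sub_div_le_iff_le_add_div (by positivity) (by positivity)]

/-- For `R0 > 1`, the sub-capacity endemic equilibrium
`E* = (S*, Im*, Is*)` is positive, satisfies the sub-capacity equilibrium
equations, is the unique such solution with `S > 0`, `Im > 0`, and satisfies
`Is* ≤ C_I ↔ R0 ≤ 1 + σm(μ+r)C_I/(μβ)`. -/
theorem stmt0 (A μ ρ r β σm σs CI : ℝ)
    (hA : 0 < A) (hμ : 0 < μ) (hρ : 0 < ρ) (hr : 0 < r) (hβ : 0 < β)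
    (hσm : 0 < σm) (hσs : 0 < σs) (hCI : 0 < CI)
    (R0 : ℝ) (hR0 : R0 = A * σm / (μ * (μ + β + ρ)))
    (hR0gt : 1 < R0)
    (Sstar Imstar Isstar : ℝ)
    (hS : Sstar = (μ + β + ρ) / σm)
    (hIm : Imstar = μ * (R0 - 1) / σm)
    (hIs : Isstar = μ * β * (R0 - 1) / (σm * (μ + r))) :
    0 < Sstar ∧ 0 < Imstar ∧ 0 < Isstar ∧
    A - σm * Sstar * Imstar - μ * Sstar = 0 ∧
    σm * Sstar * Imstar - (μ + β + ρ) * Imstar = 0 ∧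
    β * Imstar - (μ + r) * Isstar = 0 ∧
    (∀ S Im Is : ℝ, 0 < S → 0 < Im →
      A - σm * S * Im - μ * S = 0 →
      σm * S * Im - (μ + β + ρ) * Im = 0 →
      β * Im - (μ + r) * Is = 0 →
      S = Sstar ∧ Im = Imstar ∧ Is = Isstar) ∧
    (Isstar ≤ CI ↔ R0 ≤ 1 + σm * (μ + r) * CI / (μ * β)) :=
  stmt0_general A μ ρ r β σm CI hμ hρ hr hβ hσm R0 hR0 hR0gt Sstar Imstar Isstar hS hIm hIs
end

section
/- Let (S, Im, Is) satisfy S > 0 and the over-capacity equilibrium equations A − σm·S·Im − σs·S·(Is − C_I) − μS = 0, σm·S·Im + σs·S·(Is − C_I) − (μ+β+ρ)·Im = 0, β·Im − μ·Is − r·C_I = 0. Then f(S) = 0, Im = μR0/σm − μS/(μ+β+ρ), Is = βR0/σm − βS/(μ+β+ρ) − rC_I/μ; and moreover Im > 0 and Is > C_I hold if and only if S < a, where a = ((μ+β+ρ)/σm)·(R0 − σm(μ+r)C_I/(μβ)). -/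
/-!
Adding the first two equilibrium equations gives `(μ+β+ρ)·Im = A − μS`, and the third gives
`μ·Is = β·Im − r·C_I`. Substituting both into the second equation turns it into a quadratic in `S`
alone, which is `μ(μσm + βσs)·f(S)`. The same two relations give `a − S = (μ+β+ρ)(Is − C_I)/β`,
so `S < a` exactly when `Is > C_I`, and `Is > C_I` already forces `Im > 0` through the third
equation.
-/

namespace OverCapacity

variable {A μ ρ r β σm σs CI S Im Is : ℝ}

theorem quadratic_eq_zero_of_equilibrium
    (e2 : σm * S * Im + σs * S * (Is - CI) - (μ + β + ρ) * Im = 0)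
    (hIm : (μ + β + ρ) * Im = A - μ * S) (hIs : μ * Is = β * Im - r * CI) :
    μ * (μ * σm + β * σs) * S ^ 2
      - ((μ * σm + β * σs) * A - (μ + β + ρ) * σs * (μ + r) * CI + μ ^ 2 * (μ + β + ρ)) * S
      + μ * (μ + β + ρ) * A = 0 := by
  linear_combination (-μ * (μ + β + ρ)) * e2
    + ((μ * σm + β * σs) * S - μ * (μ + β + ρ)) * hIm + (μ + β + ρ) * σs * S * hIs

theorem threshold_sub_eq (hμ : μ ≠ 0) (hβ : β ≠ 0) (hσm : σm ≠ 0) (hD : μ + β + ρ ≠ 0)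
    (hIm : (μ + β + ρ) * Im = A - μ * S) (hIs : μ * Is = β * Im - r * CI) :
    (μ + β + ρ) / σm * (A * σm / (μ * (μ + β + ρ)) - σm * (μ + r) * CI / (μ * β)) - S
      = (μ + β + ρ) / β * (Is - CI) := by
  field_simp
  linear_combination (-β) * hIm - (μ + β + ρ) * hIs

theorem Im_pos_of_lt_Is (hμ : 0 < μ) (hr : 0 ≤ r) (hβ : 0 < β) (hCI : 0 < CI)
    (hIs : μ * Is = β * Im - r * CI) (h : CI < Is) : 0 < Im := by
  have hβIm : 0 < β * Im := by nlinarith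
  exact pos_of_mul_pos_right hβIm hβ.le

end OverCapacity

open OverCapacity in
theorem stmt2_general (A μ ρ r β σm σs CI : ℝ)
    (hμ : 0 < μ) (hρ : 0 < ρ) (hr : 0 < r) (hβ : 0 < β)
    (hσm : 0 < σm) (hσs : 0 < σs) (hCI : 0 < CI)
    (R0 p q a : ℝ)
    (hR0 : R0 = A * σm / (μ * (μ + β + ρ)))
    (hp : p = (μ + r) * σm * σs * CI / (μ * (μ * σm + β * σs)))
    (hq : q = μ * σm / (μ * σm + β * σs))
    (ha : a = (μ + β + ρ) / σm * (R0 - σm * (μ + r) * CI / (μ * β)))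
    (f : ℝ → ℝ)
    (hf : ∀ S, f S = S ^ 2 - (μ + β + ρ) / σm * (R0 - p + q) * S
      + ((μ + β + ρ) / σm) ^ 2 * q * R0)
    (S Im Is : ℝ)
    (e1 : A - σm * S * Im - σs * S * (Is - CI) - μ * S = 0)
    (e2 : σm * S * Im + σs * S * (Is - CI) - (μ + β + ρ) * Im = 0)
    (e3 : β * Im - μ * Is - r * CI = 0) :
    f S = 0 ∧
    Im = μ * R0 / σm - μ * S / (μ + β + ρ) ∧
    Is = β * R0 / σm - β * S / (μ + β + ρ) - r * CI / μ ∧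
    ((0 < Im ∧ CI < Is) ↔ S < a) := by
  have hD : 0 < μ + β + ρ := by positivity
  have hIm : (μ + β + ρ) * Im = A - μ * S := by linear_combination -e1 - e2
  have hIs : μ * Is = β * Im - r * CI := by linear_combination -e3
  subst hR0 hp hq ha
  refine ⟨?_, ?_, ?_, ?_⟩
  · rw [hf]
    field_simp
    linear_combination quadratic_eq_zero_of_equilibrium e2 hIm hIs
  · field_simp
    linear_combination hIm
  · field_simp
    linear_combination (μ + β + ρ) * hIs + β * hIm
  · rw [← sub_pos (b := S), threshold_sub_eq hμ.ne' hβ.ne' hσm.ne' hD.ne' hIm hIs,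
      mul_pos_iff_of_pos_left (div_pos hD hβ), sub_pos]
    exact ⟨And.right, fun h => ⟨Im_pos_of_lt_Is hμ hr.le hβ hCI hIs h, h⟩⟩

/-- Any solution of the over-capacity equilibrium equations with
`S > 0` has `f(S) = 0`, explicit expressions for `Im`, `Is` in terms of `S`,
and `Im > 0 ∧ Is > C_I ↔ S < a`. -/
theorem stmt2 (A μ ρ r β σm σs CI : ℝ)
    (hA : 0 < A) (hμ : 0 < μ) (hρ : 0 < ρ) (hr : 0 < r) (hβ : 0 < β)
    (hσm : 0 < σm) (hσs : 0 < σs) (hCI : 0 < CI)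
    (R0 p q a : ℝ)
    (hR0 : R0 = A * σm / (μ * (μ + β + ρ)))
    (hp : p = (μ + r) * σm * σs * CI / (μ * (μ * σm + β * σs)))
    (hq : q = μ * σm / (μ * σm + β * σs))
    (ha : a = (μ + β + ρ) / σm * (R0 - σm * (μ + r) * CI / (μ * β)))
    (f : ℝ → ℝ)
    (hf : ∀ S, f S = S ^ 2 - (μ + β + ρ) / σm * (R0 - p + q) * S
      + ((μ + β + ρ) / σm) ^ 2 * q * R0)
    (S Im Is : ℝ) (hS : 0 < S)
    (e1 : A - σm * S * Im - σs * S * (Is - CI) - μ * S = 0)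
    (e2 : σm * S * Im + σs * S * (Is - CI) - (μ + β + ρ) * Im = 0)
    (e3 : β * Im - μ * Is - r * CI = 0) :
    f S = 0 ∧
    Im = μ * R0 / σm - μ * S / (μ + β + ρ) ∧
    Is = β * R0 / σm - β * S / (μ + β + ρ) - r * CI / μ ∧
    ((0 < Im ∧ CI < Is) ↔ S < a) :=
  stmt2_general A μ ρ r β σm σs CI hμ hρ hr hβ hσm hσs hCI R0 p q a hR0 hp hq ha f hf S Im Is e1 e2
    e3
end

section
/- The value of f at a = ((μ+β+ρ)/σm)·(R0 − M) satisfies the identity f(a) = −((μ+β+ρ)²·q·(μ+r)·C_I/(σm·μ·β))·(R0 − 1 − M). In particular f(a) ≤ 0 if and only if R0 ≥ 1 + M, and f(a) < 0 if and only if R0 > 1 + M. -/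
/-- The identity for `f(a)` and the sign conditions on `f(a)` in
terms of `R0` versus `1 + M`. -/
theorem stmt4 (A μ ρ r β σm σs CI : ℝ)
    (hA : 0 < A) (hμ : 0 < μ) (hρ : 0 < ρ) (hr : 0 < r) (hβ : 0 < β)
    (hσm : 0 < σm) (hσs : 0 < σs) (hCI : 0 < CI)
    (R0 p q M a : ℝ)
    (hR0 : R0 = A * σm / (μ * (μ + β + ρ)))
    (hp : p = (μ + r) * σm * σs * CI / (μ * (μ * σm + β * σs)))
    (hq : q = μ * σm / (μ * σm + β * σs))
    (hM : M = σm * (μ + r) * CI / (μ * β))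
    (ha : a = (μ + β + ρ) / σm * (R0 - M))
    (f : ℝ → ℝ)
    (hf : ∀ S, f S = S ^ 2 - (μ + β + ρ) / σm * (R0 - p + q) * S
      + ((μ + β + ρ) / σm) ^ 2 * q * R0) :
    f a = -((μ + β + ρ) ^ 2 * q * (μ + r) * CI / (σm * μ * β)) * (R0 - 1 - M) ∧
    (f a ≤ 0 ↔ R0 ≥ 1 + M) ∧
    (f a < 0 ↔ R0 > 1 + M) := by
  have hd : μ * σm + β * σs > 0 := by positivity
  have key : f a = -((μ + β + ρ) ^ 2 * q * (μ + r) * CI / (σm * μ * β)) * (R0 - 1 - M) := by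
    rw [hf, ha, hp, hq, hM]
    field_simp
    ring
  have hK : 0 < (μ + β + ρ) ^ 2 * q * (μ + r) * CI / (σm * μ * β) := by
    have hq0 : 0 < q := by rw [hq]; positivity
    positivity
  refine ⟨key, ?_, ?_⟩ <;> rw [key] <;> constructor <;> intro h <;> nlinarith
end

section
/- Suppose C_I < βA/((μ+r)(μ+r+ρ)) and β²σs/((μ+r)σm²) ≤ C_I. If 1 < R0 ≤ 1 + M, then the set of endemic equilibria equals the singleton {((μ+β+ρ)/σm, μ(R0−1)/σm, μβ(R0−1)/(σm(μ+r)))}. If R0 > 1 + M, then the set of endemic equilibria equals the singleton {(S1, μR0/σm − μS1/(μ+β+ρ), βR0/σm − βS1/(μ+β+ρ) − rC_I/μ)} where S1 = ((μ+β+ρ)/(2σm))·(R0 − p + q − √((R0−p−q)² − 4pq)). -/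
/-!
Below capacity (`Is ≤ CI`) the equations are linear: they force `σm S = μ + β + ρ`, and the
resulting point stays below capacity exactly when `R0 ≤ 1 + M`. Above capacity, `Im` and `Is` are
affine in `S`, and in the variable `t = σm S / (μ + β + ρ)` the remaining equation becomes
`f t = t² - (R0 - p + q) t + R0 q = 0`, while `CI < Is` becomes `t < R0 - M`. The sign of
`f (R0 - M)` is that of `1 + M - R0`. If it is negative, exactly the smaller root of `f` lies below
`R0 - M`, and it is positive. If it is nonnegative, the lower bound on `CI` puts the vertex of `f`
to the right of `R0 - M`, so `f` has no root below `R0 - M`.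
-/

/-- An endemic equilibrium of the disease-severity-structured model. -/
def IsEndemicEquilibrium (A μ ρ r β σm σs CI : ℝ) (x : ℝ × ℝ × ℝ) : Prop :=
  0 < x.1 ∧ 0 < x.2.1 ∧ 0 < x.2.2 ∧
  A - σm * x.1 * x.2.1 - σs * x.1 * max 0 (x.2.2 - CI) - μ * x.1 = 0 ∧
  σm * x.1 * x.2.1 + σs * x.1 * max 0 (x.2.2 - CI) - (μ + β + ρ) * x.2.1 = 0 ∧
  β * x.2.1 - min (r * x.2.2) (r * CI) - μ * x.2.2 = 0

section Quadratic

variable {b c T t : ℝ}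

lemma sq_sqrt_sq_sub_four_mul_of_neg (hT : T ^ 2 - b * T + c < 0) :
    √(b ^ 2 - 4 * c) ^ 2 = b ^ 2 - 4 * c :=
  Real.sq_sqrt (by nlinarith [sq_nonneg (2 * T - b)])

lemma abs_two_mul_sub_lt_sqrt_of_neg (hT : T ^ 2 - b * T + c < 0) :
    |2 * T - b| < √(b ^ 2 - 4 * c) :=
  (Real.lt_sqrt (abs_nonneg _)).2 (by rw [sq_abs]; linarith)

lemma quadratic_pos_of_lt_of_two_mul_le (ht : t < T) (hb : 2 * T ≤ b)
    (hT : 0 ≤ T ^ 2 - b * T + c) : 0 < t ^ 2 - b * t + c := by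
  have : 0 < (T - t) * (b - t - T) := mul_pos (by linarith) (by linarith)
  linarith

lemma quadratic_eq_zero_and_lt_iff (hT : T ^ 2 - b * T + c < 0) :
    t ^ 2 - b * t + c = 0 ∧ t < T ↔ t = (b - √(b ^ 2 - 4 * c)) / 2 := by
  obtain ⟨hlo, hhi⟩ := abs_lt.1 (abs_two_mul_sub_lt_sqrt_of_neg hT)
  have hsq := sq_sqrt_sq_sub_four_mul_of_neg hT
  have hfactor : t ^ 2 - b * t + c
      = (t - (b - √(b ^ 2 - 4 * c)) / 2) * (t - (b + √(b ^ 2 - 4 * c)) / 2) := by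
    linear_combination (1 / 4 : ℝ) * hsq
  constructor
  · rintro ⟨hroot, ht⟩
    rw [hfactor] at hroot
    rcases mul_eq_zero.1 hroot with h | h <;> linarith
  · rintro rfl
    exact ⟨by rw [hfactor]; ring, by linarith⟩

lemma quadratic_smaller_root_pos (hT : T ^ 2 - b * T + c < 0) (hT₀ : 0 < T) (hc : 0 < c) :
    0 < (b - √(b ^ 2 - 4 * c)) / 2 := by
  obtain ⟨-, hhi⟩ := abs_lt.1 (abs_two_mul_sub_lt_sqrt_of_neg hT)
  have hsq := sq_sqrt_sq_sub_four_mul_of_neg hT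
  have hprod : (b - √(b ^ 2 - 4 * c)) / 2 * ((b + √(b ^ 2 - 4 * c)) / 2) = c := by
    linear_combination (-1 / 4 : ℝ) * hsq
  exact (pos_iff_pos_of_mul_pos (hprod ▸ hc)).2 (by linarith)

end Quadratic

section Model

variable {A μ ρ r β σm σs CI R0 p q M S S1 Im Is : ℝ}

lemma under_capacity_infected_le_iff (hμ : 0 < μ) (hr : 0 < r) (hβ : 0 < β) (hσm : 0 < σm)
    (hM : M = σm * (μ + r) * CI / (μ * β)) :
    μ * β * (R0 - 1) / (σm * (μ + r)) ≤ CI ↔ R0 ≤ 1 + M := by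
  rw [div_le_iff₀ (by positivity), hM, ← sub_le_iff_le_add', le_div_iff₀ (by positivity)]
  constructor <;> intro h <;> linarith

lemma IsEndemicEquilibrium.eq_of_le_capacity (hμ : 0 < μ) (hρ : 0 < ρ) (hr : 0 < r)
    (hβ : 0 < β) (hσm : 0 < σm) (hR0 : R0 = A * σm / (μ * (μ + β + ρ)))
    (h : IsEndemicEquilibrium A μ ρ r β σm σs CI (S, Im, Is)) (hIs : Is ≤ CI) :
    (S, Im, Is)
      = ((μ + β + ρ) / σm, μ * (R0 - 1) / σm, μ * β * (R0 - 1) / (σm * (μ + r))) := by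
  obtain ⟨-, hIm, -, e1, e2, e3⟩ := h
  dsimp only at e1 e2 e3
  rw [max_eq_left (sub_nonpos.2 hIs)] at e1 e2
  rw [min_eq_left (mul_le_mul_of_nonneg_left hIs hr.le)] at e3
  have hK : 0 < μ + β + ρ := by positivity
  have hS : σm * S = μ + β + ρ := by
    have : (σm * S - (μ + β + ρ)) * Im = 0 := by linear_combination e2
    linarith [(mul_eq_zero.1 this).resolve_right hIm.ne']
  have hA : A * σm = μ * (μ + β + ρ) * R0 := by rw [hR0]; field_simp
  have hIm' : σm * Im = μ * (R0 - 1) := by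
    apply mul_left_cancel₀ hK.ne'
    linear_combination (-σm) * e1 - (σm * Im + μ) * hS + hA
  have hIs' : (μ + r) * Is = β * Im := by linear_combination -e3
  refine Prod.ext ?_ (Prod.ext ?_ ?_) <;> dsimp only
  · field_simp; linarith
  · field_simp; linarith
  · field_simp; linear_combination σm * hIs' + β * hIm'

lemma isEndemicEquilibrium_under_capacity (hμ : 0 < μ) (hρ : 0 < ρ) (hr : 0 < r) (hβ : 0 < β)
    (hσm : 0 < σm) (hR0 : R0 = A * σm / (μ * (μ + β + ρ)))
    (hM : M = σm * (μ + r) * CI / (μ * β)) (h1 : 1 < R0) (h2 : R0 ≤ 1 + M) :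
    IsEndemicEquilibrium A μ ρ r β σm σs CI
      ((μ + β + ρ) / σm, μ * (R0 - 1) / σm, μ * β * (R0 - 1) / (σm * (μ + r))) := by
  have hIs := (under_capacity_infected_le_iff hμ hr hβ hσm hM).2 h2
  have hA : A * σm = μ * (μ + β + ρ) * R0 := by rw [hR0]; field_simp
  have hR0' : 0 < R0 - 1 := sub_pos.2 h1
  refine ⟨by positivity, by positivity, by positivity, ?_, ?_, ?_⟩ <;> dsimp only
  · rw [max_eq_left (sub_nonpos.2 hIs)]
    field_simp
    linear_combination hA
  · rw [max_eq_left (sub_nonpos.2 hIs)]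
    field_simp
    ring
  · rw [min_eq_left (mul_le_mul_of_nonneg_left hIs hr.le)]
    field_simp
    ring

lemma over_capacity_infected_sub_capacity (hμ : 0 < μ) (hρ : 0 < ρ) (hβ : 0 < β)
    (hσm : 0 < σm) (hM : M = σm * (μ + r) * CI / (μ * β)) :
    β * R0 / σm - β * S / (μ + β + ρ) - r * CI / μ - CI
      = β / σm * (R0 - M - σm * S / (μ + β + ρ)) := by
  rw [hM]
  field_simp
  ring

lemma over_capacity_residual (hμ : 0 < μ) (hρ : 0 < ρ) (hβ : 0 < β) (hσm : 0 < σm)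
    (hσs : 0 < σs) (hp : p = (μ + r) * σm * σs * CI / (μ * (μ * σm + β * σs)))
    (hq : q = μ * σm / (μ * σm + β * σs)) (hM : M = σm * (μ + r) * CI / (μ * β)) :
    σm * S * (μ * R0 / σm - μ * S / (μ + β + ρ))
        + σs * S * (β / σm * (R0 - M - σm * S / (μ + β + ρ)))
        - (μ + β + ρ) * (μ * R0 / σm - μ * S / (μ + β + ρ))
      = -((μ * σm + β * σs) * (μ + β + ρ) / σm ^ 2) *
        ((σm * S / (μ + β + ρ)) ^ 2 - (R0 - p + q) * (σm * S / (μ + β + ρ)) + R0 * q) := by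
  rw [hp, hq, hM]
  field_simp
  ring

lemma IsEndemicEquilibrium.eq_of_capacity_lt (hμ : 0 < μ) (hρ : 0 < ρ) (hr : 0 < r)
    (hβ : 0 < β) (hσm : 0 < σm) (hσs : 0 < σs) (hR0 : R0 = A * σm / (μ * (μ + β + ρ)))
    (hp : p = (μ + r) * σm * σs * CI / (μ * (μ * σm + β * σs)))
    (hq : q = μ * σm / (μ * σm + β * σs)) (hM : M = σm * (μ + r) * CI / (μ * β))
    (h : IsEndemicEquilibrium A μ ρ r β σm σs CI (S, Im, Is)) (hIs : CI < Is) :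
    Im = μ * R0 / σm - μ * S / (μ + β + ρ) ∧
    Is = β * R0 / σm - β * S / (μ + β + ρ) - r * CI / μ ∧
    (σm * S / (μ + β + ρ)) ^ 2 - (R0 - p + q) * (σm * S / (μ + β + ρ)) + R0 * q = 0 ∧
    σm * S / (μ + β + ρ) < R0 - M := by
  obtain ⟨-, -, -, e1, e2, e3⟩ := h
  dsimp only at e1 e2 e3
  rw [max_eq_right (sub_nonneg.2 hIs.le)] at e1 e2
  rw [min_eq_right (mul_le_mul_of_nonneg_left hIs.le hr.le)] at e3
  have hA : A * σm = μ * (μ + β + ρ) * R0 := by rw [hR0]; field_simp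
  have hIm : Im = μ * R0 / σm - μ * S / (μ + β + ρ) := by
    field_simp
    linear_combination (-σm) * (e1 + e2) + hA
  subst hIm
  have hIs' : Is = β * R0 / σm - β * S / (μ + β + ρ) - r * CI / μ := by
    apply mul_left_cancel₀ hμ.ne'
    linear_combination (norm := (field_simp; ring)) -e3
  subst hIs'
  have hgap := sub_pos.2 hIs
  rw [over_capacity_infected_sub_capacity hμ hρ hβ hσm hM] at e2 hgap
  rw [over_capacity_residual hμ hρ hβ hσm hσs hp hq hM] at e2
  refine ⟨rfl, rfl, (mul_eq_zero.1 e2).resolve_left (neg_ne_zero.2 (by positivity)), ?_⟩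
  linarith [(pos_iff_pos_of_mul_pos hgap).1 (by positivity)]

lemma isEndemicEquilibrium_over_capacity (hμ : 0 < μ) (hρ : 0 < ρ) (hr : 0 < r) (hβ : 0 < β)
    (hσm : 0 < σm) (hσs : 0 < σs) (hCI : 0 < CI) (hR0 : R0 = A * σm / (μ * (μ + β + ρ)))
    (hp : p = (μ + r) * σm * σs * CI / (μ * (μ * σm + β * σs)))
    (hq : q = μ * σm / (μ * σm + β * σs)) (hM : M = σm * (μ + r) * CI / (μ * β))
    (hS : 0 < S)
    (hf : (σm * S / (μ + β + ρ)) ^ 2 - (R0 - p + q) * (σm * S / (μ + β + ρ)) + R0 * q = 0)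
    (hlt : σm * S / (μ + β + ρ) < R0 - M) :
    IsEndemicEquilibrium A μ ρ r β σm σs CI
      (S, μ * R0 / σm - μ * S / (μ + β + ρ),
        β * R0 / σm - β * S / (μ + β + ρ) - r * CI / μ) := by
  have hA : A * σm = μ * (μ + β + ρ) * R0 := by rw [hR0]; field_simp
  have hgap := over_capacity_infected_sub_capacity (R0 := R0) (S := S) hμ hρ hβ hσm hM
  have hgap_pos : 0 < β * R0 / σm - β * S / (μ + β + ρ) - r * CI / μ - CI := by
    rw [hgap]; exact mul_pos (by positivity) (sub_pos.2 hlt)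
  have hM_pos : 0 < M := by rw [hM]; positivity
  have hIm :
      μ * R0 / σm - μ * S / (μ + β + ρ) = μ / σm * (R0 - σm * S / (μ + β + ρ)) := by
    field_simp
  have he2 := over_capacity_residual (R0 := R0) (S := S) hμ hρ hβ hσm hσs hp hq hM
  rw [hf, mul_zero, ← hgap] at he2
  refine ⟨hS, ?_, by linarith, ?_⟩ <;> dsimp only
  · rw [hIm]; exact mul_pos (by positivity) (by linarith)
  rw [max_eq_right hgap_pos.le, min_eq_right (mul_le_mul_of_nonneg_left (by linarith) hr.le)]
  refine ⟨?_, he2, ?_⟩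
  · linear_combination (norm := (field_simp; ring)) -he2 + hA / σm
  · field_simp
    ring

lemma threshold_quadratic_nonneg_iff (hμ : 0 < μ) (hr : 0 < r) (hβ : 0 < β) (hσm : 0 < σm)
    (hσs : 0 < σs) (hCI : 0 < CI)
    (hp : p = (μ + r) * σm * σs * CI / (μ * (μ * σm + β * σs)))
    (hq : q = μ * σm / (μ * σm + β * σs)) (hM : M = σm * (μ + r) * CI / (μ * β)) :
    0 ≤ (R0 - M) ^ 2 - (R0 - p + q) * (R0 - M) + R0 * q ↔ R0 ≤ 1 + M := by
  have key : ((R0 - M) ^ 2 - (R0 - p + q) * (R0 - M) + R0 * q) * ((μ * σm + β * σs) * β * μ)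
      = μ * σm ^ 2 * (μ + r) * CI * (1 + M - R0) := by
    rw [hp, hq, hM]
    field_simp
    ring
  rw [← mul_nonneg_iff_of_pos_right (c := (μ * σm + β * σs) * β * μ) (by positivity), key,
    mul_nonneg_iff_of_pos_left (by positivity), sub_nonneg]

lemma two_mul_sub_le_of_le_one_add (hμ : 0 < μ) (hr : 0 < r) (hβ : 0 < β) (hσm : 0 < σm)
    (hσs : 0 < σs)
    (hp : p = (μ + r) * σm * σs * CI / (μ * (μ * σm + β * σs)))
    (hq : q = μ * σm / (μ * σm + β * σs)) (hM : M = σm * (μ + r) * CI / (μ * β))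
    (hbig : β ^ 2 * σs / ((μ + r) * σm ^ 2) ≤ CI) (h : R0 ≤ 1 + M) :
    2 * (R0 - M) ≤ R0 - p + q := by
  have key : (M - (1 + p - q)) * (μ * β * (μ * σm + β * σs))
      = μ * ((μ + r) * σm ^ 2 * CI - β ^ 2 * σs) := by
    rw [hp, hq, hM]
    field_simp
    ring
  have hbig' : 0 ≤ (μ + r) * σm ^ 2 * CI - β ^ 2 * σs := by
    rw [div_le_iff₀ (by positivity)] at hbig
    linarith
  have : 0 ≤ M - (1 + p - q) := by
    rw [← mul_nonneg_iff_of_pos_right (c := μ * β * (μ * σm + β * σs)) (by positivity), key]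
    positivity
  linarith

lemma setOf_isEndemicEquilibrium_of_le_one_add (hμ : 0 < μ) (hρ : 0 < ρ) (hr : 0 < r)
    (hβ : 0 < β) (hσm : 0 < σm) (hσs : 0 < σs) (hCI : 0 < CI)
    (hR0 : R0 = A * σm / (μ * (μ + β + ρ)))
    (hp : p = (μ + r) * σm * σs * CI / (μ * (μ * σm + β * σs)))
    (hq : q = μ * σm / (μ * σm + β * σs)) (hM : M = σm * (μ + r) * CI / (μ * β))
    (hbig : β ^ 2 * σs / ((μ + r) * σm ^ 2) ≤ CI) (h1 : 1 < R0) (h2 : R0 ≤ 1 + M) :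
    {x : ℝ × ℝ × ℝ | IsEndemicEquilibrium A μ ρ r β σm σs CI x}
      = {((μ + β + ρ) / σm, μ * (R0 - 1) / σm, μ * β * (R0 - 1) / (σm * (μ + r)))} := by
  refine Set.eq_singleton_iff_unique_mem.2
    ⟨isEndemicEquilibrium_under_capacity hμ hρ hr hβ hσm hR0 hM h1 h2, ?_⟩
  rintro ⟨S, Im, Is⟩ h
  rcases le_or_gt Is CI with hIs | hIs
  · exact h.eq_of_le_capacity hμ hρ hr hβ hσm hR0 hIs
  · obtain ⟨-, -, hroot, hlt⟩ := h.eq_of_capacity_lt hμ hρ hr hβ hσm hσs hR0 hp hq hM hIs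
    refine absurd hroot (quadratic_pos_of_lt_of_two_mul_le hlt ?_ ?_).ne'
    · exact two_mul_sub_le_of_le_one_add hμ hr hβ hσm hσs hp hq hM hbig h2
    · exact (threshold_quadratic_nonneg_iff hμ hr hβ hσm hσs hCI hp hq hM).2 h2

lemma over_capacity_root_iff (hμ : 0 < μ) (hρ : 0 < ρ) (hr : 0 < r) (hβ : 0 < β)
    (hσm : 0 < σm) (hσs : 0 < σs) (hCI : 0 < CI)
    (hp : p = (μ + r) * σm * σs * CI / (μ * (μ * σm + β * σs)))
    (hq : q = μ * σm / (μ * σm + β * σs)) (hM : M = σm * (μ + r) * CI / (μ * β))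
    (hS1 : S1 = (μ + β + ρ) / (2 * σm) * (R0 - p + q - √((R0 - p - q) ^ 2 - 4 * p * q)))
    (h2 : 1 + M < R0) :
    0 < S1 ∧ ∀ S,
      (σm * S / (μ + β + ρ)) ^ 2 - (R0 - p + q) * (σm * S / (μ + β + ρ)) + R0 * q = 0
        ∧ σm * S / (μ + β + ρ) < R0 - M ↔ S = S1 := by
  have hT := not_le.1 ((threshold_quadratic_nonneg_iff hμ hr hβ hσm hσs hCI hp hq hM).not.2
    (not_le.2 h2))
  have hM_pos : 0 < M := by rw [hM]; positivity
  have hq_pos : 0 < q := by rw [hq]; positivity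
  rw [show (R0 - p - q) ^ 2 - 4 * p * q = (R0 - p + q) ^ 2 - 4 * (R0 * q) by ring] at hS1
  set t1 := (R0 - p + q - √((R0 - p + q) ^ 2 - 4 * (R0 * q))) / 2 with ht1
  have hS1t : S1 = (μ + β + ρ) * t1 / σm := by rw [hS1, ht1]; ring
  have ht1_pos : 0 < t1 := quadratic_smaller_root_pos hT (by linarith) (by nlinarith)
  refine ⟨by rw [hS1t]; positivity, fun S => ?_⟩
  rw [quadratic_eq_zero_and_lt_iff hT, ← ht1, hS1t]
  constructor <;> intro h <;> field_simp at h ⊢ <;> linarith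

lemma setOf_isEndemicEquilibrium_of_one_add_lt (hμ : 0 < μ) (hρ : 0 < ρ) (hr : 0 < r)
    (hβ : 0 < β) (hσm : 0 < σm) (hσs : 0 < σs) (hCI : 0 < CI)
    (hR0 : R0 = A * σm / (μ * (μ + β + ρ)))
    (hp : p = (μ + r) * σm * σs * CI / (μ * (μ * σm + β * σs)))
    (hq : q = μ * σm / (μ * σm + β * σs)) (hM : M = σm * (μ + r) * CI / (μ * β))
    (hS1 : S1 = (μ + β + ρ) / (2 * σm) * (R0 - p + q - √((R0 - p - q) ^ 2 - 4 * p * q)))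
    (h2 : 1 + M < R0) :
    {x : ℝ × ℝ × ℝ | IsEndemicEquilibrium A μ ρ r β σm σs CI x}
      = {(S1, μ * R0 / σm - μ * S1 / (μ + β + ρ),
          β * R0 / σm - β * S1 / (μ + β + ρ) - r * CI / μ)} := by
  obtain ⟨hS1_pos, hroot_iff⟩ :=
    over_capacity_root_iff hμ hρ hr hβ hσm hσs hCI hp hq hM hS1 h2
  obtain ⟨hroot1, hlt1⟩ := (hroot_iff S1).2 rfl
  refine Set.eq_singleton_iff_unique_mem.2 ⟨isEndemicEquilibrium_over_capacity hμ hρ hr hβ hσm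
    hσs hCI hR0 hp hq hM hS1_pos hroot1 hlt1, ?_⟩
  rintro ⟨S, Im, Is⟩ h
  rcases le_or_gt Is CI with hIs | hIs
  · have heq := h.eq_of_le_capacity hμ hρ hr hβ hσm hR0 hIs
    simp only [Prod.mk.injEq] at heq
    obtain ⟨-, -, rfl⟩ := heq
    exact absurd ((under_capacity_infected_le_iff hμ hr hβ hσm hM).1 hIs) (not_le.2 h2)
  · obtain ⟨rfl, rfl, hroot, hlt⟩ :=
      h.eq_of_capacity_lt hμ hρ hr hβ hσm hσs hR0 hp hq hM hIs
    rw [(hroot_iff S).1 ⟨hroot, hlt⟩]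

end Model

theorem stmt10_general (A μ ρ r β σm σs CI : ℝ)
    (hμ : 0 < μ) (hρ : 0 < ρ) (hr : 0 < r) (hβ : 0 < β)
    (hσm : 0 < σm) (hσs : 0 < σs) (hCI : 0 < CI)
    (R0 p q M : ℝ)
    (hR0 : R0 = A * σm / (μ * (μ + β + ρ)))
    (hp : p = (μ + r) * σm * σs * CI / (μ * (μ * σm + β * σs)))
    (hq : q = μ * σm / (μ * σm + β * σs))
    (hM : M = σm * (μ + r) * CI / (μ * β))
    (hbig : β ^ 2 * σs / ((μ + r) * σm ^ 2) ≤ CI)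
    (S1 : ℝ)
    (hS1 : S1 = (μ + β + ρ) / (2 * σm)
      * (R0 - p + q - Real.sqrt ((R0 - p - q) ^ 2 - 4 * p * q))) :
    (1 < R0 → R0 ≤ 1 + M →
      {x : ℝ × ℝ × ℝ | IsEndemicEquilibrium A μ ρ r β σm σs CI x}
        = {((μ + β + ρ) / σm, μ * (R0 - 1) / σm,
            μ * β * (R0 - 1) / (σm * (μ + r)))}) ∧
    (R0 > 1 + M →
      {x : ℝ × ℝ × ℝ | IsEndemicEquilibrium A μ ρ r β σm σs CI x}
        = {(S1, μ * R0 / σm - μ * S1 / (μ + β + ρ),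
            β * R0 / σm - β * S1 / (μ + β + ρ) - r * CI / μ)}) :=
  ⟨setOf_isEndemicEquilibrium_of_le_one_add hμ hρ hr hβ hσm hσs hCI hR0 hp hq hM hbig,
    setOf_isEndemicEquilibrium_of_one_add_lt hμ hρ hr hβ hσm hσs hCI hR0 hp hq hM hS1⟩

/-- Theorem 2.1 of the paper. -/
theorem stmt10 (A μ ρ r β σm σs CI : ℝ)
    (hA : 0 < A) (hμ : 0 < μ) (hρ : 0 < ρ) (hr : 0 < r) (hβ : 0 < β)
    (hσm : 0 < σm) (hσs : 0 < σs) (hCI : 0 < CI)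
    (R0 p q M : ℝ)
    (hR0 : R0 = A * σm / (μ * (μ + β + ρ)))
    (hp : p = (μ + r) * σm * σs * CI / (μ * (μ * σm + β * σs)))
    (hq : q = μ * σm / (μ * σm + β * σs))
    (hM : M = σm * (μ + r) * CI / (μ * β))
    (hsmall : CI < β * A / ((μ + r) * (μ + r + ρ)))
    (hbig : β ^ 2 * σs / ((μ + r) * σm ^ 2) ≤ CI)
    (S1 : ℝ)
    (hS1 : S1 = (μ + β + ρ) / (2 * σm)
      * (R0 - p + q - Real.sqrt ((R0 - p - q) ^ 2 - 4 * p * q))) :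
    (1 < R0 → R0 ≤ 1 + M →
      {x : ℝ × ℝ × ℝ | IsEndemicEquilibrium A μ ρ r β σm σs CI x}
        = {((μ + β + ρ) / σm, μ * (R0 - 1) / σm,
            μ * β * (R0 - 1) / (σm * (μ + r)))}) ∧
    (R0 > 1 + M →
      {x : ℝ × ℝ × ℝ | IsEndemicEquilibrium A μ ρ r β σm σs CI x}
        = {(S1, μ * R0 / σm - μ * S1 / (μ + β + ρ),
            β * R0 / σm - β * S1 / (μ + β + ρ) - r * CI / μ)}) :=
  stmt10_general A μ ρ r β σm σs CI hμ hρ hr hβ hσm hσs hCI R0 p q M hR0 hp hq hM hbig S1 hS1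
end

section
/- Suppose C_I < βA/((μ+r)(μ+r+ρ)) and (μ²/(μ+r))·(√(β/(μσm) + 1/σs) − √(1/σs))² < C_I < β²σs/((μ+r)σm²). Define E* = ((μ+β+ρ)/σm, μ(R0−1)/σm, μβ(R0−1)/(σm(μ+r))) and, for i = 1, 2, Ei = (Si, μR0/σm − μSi/(μ+β+ρ), βR0/σm − βSi/(μ+β+ρ) − rC_I/μ) with S1 = ((μ+β+ρ)/(2σm))(R0 − p + q − √D1), S2 = ((μ+β+ρ)/(2σm))(R0 − p + q + √D1), D1 = (R0−p−q)² − 4pq. Then: if 1 < R0 < (√p+√q)², the set of endemic equilibria equals {E*}; if (√p+√q)² ≤ R0 < 1 + M, it equals {E*, E1, E2}; if R0 = 1 + M, it equals {E*, E1}; and if R0 > 1 + M, it equals {E1}. -/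
/-
Below capacity (`Is ≤ CI`) the capacity terms vanish and the system is the classical SIR
one, whose only endemic state is `E*`; it lies below capacity exactly when `1 < R0 ≤ 1 + M`.
Above capacity, adding the first two equations and using the third makes `Im` and `Is` affine
in `S`, and in the rescaled variable `y = σm S / (μ + β + ρ)` the second equation becomes
`f y = y² - (R0 - p + q) y + R0 q = 0`, while `Is > CI` reads `y < R0 - M`. Since
`p = M (1 - q)`, `f (R0 - M) = q M (1 + M - R0)`, so the sign of `1 + M - R0` together with
the position of the vertex decides which roots lie in `(0, R0 - M)`. The two bounds on `CI`
say `(1 - √q)² < p` and `M q < 1 - q`, which order the thresholds as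
`1, M + M q + q < (√p + √q)² < 1 + M`.
-/

section MonicQuadratic

variable {b c t y : ℝ}

lemma lt_root_of_two_mul_lt (hbt : 2 * t < b) (ht : 0 < t ^ 2 - b * t + c)
    (hy : y ^ 2 - b * y + c = 0) : t < y := by
  by_contra! hyt
  nlinarith

lemma root_lt_of_lt_two_mul (hbt : b < 2 * t) (ht : 0 < t ^ 2 - b * t + c)
    (hy : y ^ 2 - b * y + c = 0) : y < t := by
  by_contra! hyt
  nlinarith

lemma discrim_nonneg_of_root (hy : y ^ 2 - b * y + c = 0) : 0 ≤ b ^ 2 - 4 * c := by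
  have h : b ^ 2 - 4 * c = (2 * y - b) ^ 2 := by linear_combination -4 * hy
  exact h ▸ sq_nonneg _

lemma root_iff_of_discrim_nonneg (hΔ : 0 ≤ b ^ 2 - 4 * c) :
    y ^ 2 - b * y + c = 0 ↔
      y = (b - √(b ^ 2 - 4 * c)) / 2 ∨ y = (b + √(b ^ 2 - 4 * c)) / 2 := by
  have hs : discrim 1 (-b) c = √(b ^ 2 - 4 * c) * √(b ^ 2 - 4 * c) := by
    rw [Real.mul_self_sqrt hΔ, discrim]; ring
  have h := quadratic_eq_zero_iff one_ne_zero hs y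
  simp only [neg_neg, mul_one, one_mul, neg_mul, ← sub_eq_add_neg, ← sq] at h
  rw [h, or_comm]

lemma roots_lt_and_lt_of_neg (ht : t ^ 2 - b * t + c < 0) :
    (b - √(b ^ 2 - 4 * c)) / 2 < t ∧ t < (b + √(b ^ 2 - 4 * c)) / 2 := by
  have h : |2 * t - b| < √(b ^ 2 - 4 * c) :=
    Real.lt_sqrt (abs_nonneg _) |>.mpr (by rw [sq_abs]; linarith)
  constructor <;> linarith [abs_lt.mp h]

lemma smaller_root_pos (hb : 0 < b) (hc : 0 < c) : 0 < (b - √(b ^ 2 - 4 * c)) / 2 := by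
  have h : √(b ^ 2 - 4 * c) < b := (Real.sqrt_lt' hb).mpr (by linarith)
  linarith

end MonicQuadratic

section Thresholds

variable {p q M : ℝ}

lemma sq_sqrt_add_sqrt (hp : 0 ≤ p) (hq : 0 ≤ q) :
    (√p + √q) ^ 2 = p + q + 2 * √(p * q) := by
  rw [add_sq, Real.sq_sqrt hp, Real.sq_sqrt hq, Real.sqrt_mul hp]; ring

lemma one_lt_sq_sqrt_add_sqrt (h : (1 - √q) ^ 2 < p) : 1 < (√p + √q) ^ 2 := by
  have h1 : |1 - √q| < √p := Real.lt_sqrt (abs_nonneg _) |>.mpr (by rwa [sq_abs])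
  have h2 : 1 < √p + √q := by linarith [le_abs_self (1 - √q)]
  nlinarith

lemma add_mul_add_lt_sq_sqrt_add_sqrt (hq : 0 < q) (hM : 0 < M) (hp : p = M * (1 - q))
    (hMq : M * q < 1 - q) : M + M * q + q < (√p + √q) ^ 2 := by
  have hp0 : 0 < p := hp ▸ mul_pos hM (by nlinarith)
  have hpq : M * q < √(p * q) :=
    Real.lt_sqrt (by positivity) |>.mpr (by rw [hp]; nlinarith [mul_pos hM hq])
  rw [sq_sqrt_add_sqrt hp0.le hq.le]
  linarith

lemma sq_sqrt_add_sqrt_lt_one_add (hq : 0 < q) (hM : 0 < M) (hp : p = M * (1 - q))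
    (hMq : M * q < 1 - q) : (√p + √q) ^ 2 < 1 + M := by
  have hp0 : 0 < p := hp ▸ mul_pos hM (by nlinarith)
  have hpq : 2 * √(p * q) < 1 - q + M * q := by
    have h := Real.sq_sqrt (mul_pos hp0 hq).le
    nlinarith [Real.sqrt_nonneg (p * q), mul_pos hM hq]
  rw [sq_sqrt_add_sqrt hp0.le hq.le]
  linarith

end Thresholds

/-- The rescaled susceptible levels `y = σm S / (μ + β + ρ)` of the equilibria with `Is > CI`. -/
def overCapacityRoots (R0 p q M : ℝ) : Set ℝ :=
  {y | 0 < y ∧ y < R0 - M ∧ y ^ 2 - (R0 - p + q) * y + R0 * q = 0}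

section OverCapacityRoots

variable {R0 p q M : ℝ}

lemma overCapacity_discrim_eq (R0 p q : ℝ) :
    (R0 - p + q) ^ 2 - 4 * (R0 * q) = (R0 - p - q) ^ 2 - 4 * p * q := by ring

lemma overCapacity_quadratic_at_threshold (hp : p = M * (1 - q)) :
    (R0 - M) ^ 2 - (R0 - p + q) * (R0 - M) + R0 * q = q * M * (1 + M - R0) := by
  subst hp; ring

lemma overCapacityRoots_eq_empty (hq : 0 < q) (hq1 : q ≤ 1) (hM : 0 < M) (hp : p = M * (1 - q))
    (hW : R0 < (√p + √q) ^ 2) (hR0 : R0 < 1 + M) : overCapacityRoots R0 p q M = ∅ := by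
  refine Set.eq_empty_of_forall_notMem fun y ⟨_, hyM, hy⟩ ↦ hyM.not_gt ?_
  have hΔ := discrim_nonneg_of_root hy
  rw [overCapacity_discrim_eq] at hΔ
  have hp0 : 0 ≤ p := hp ▸ mul_nonneg hM.le (sub_nonneg.mpr hq1)
  rw [sq_sqrt_add_sqrt hp0 hq.le] at hW
  have hs := Real.sq_sqrt (mul_nonneg hp0 hq.le)
  have hR0lo : R0 - p - q ≤ -2 * √(p * q) := by
    nlinarith [Real.sqrt_nonneg (p * q)]
  refine lt_root_of_two_mul_lt ?_ ?_ hy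
  · nlinarith [Real.sqrt_nonneg (p * q), mul_pos hM hq]
  · rw [overCapacity_quadratic_at_threshold hp]
    have := mul_pos hq hM
    nlinarith

lemma overCapacityRoots_eq_pair (hq : 0 < q) (hM : 0 < M) (hp : p = M * (1 - q))
    (hMq : M * q < 1 - q) (hW : (√p + √q) ^ 2 ≤ R0) (hR0 : R0 < 1 + M) :
    overCapacityRoots R0 p q M =
      {(R0 - p + q - √((R0 - p - q) ^ 2 - 4 * p * q)) / 2,
        (R0 - p + q + √((R0 - p - q) ^ 2 - 4 * p * q)) / 2} := by
  have hW' := add_mul_add_lt_sq_sqrt_add_sqrt hq hM hp hMq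
  have hp0 : 0 < p := hp ▸ mul_pos hM (by nlinarith)
  have hs := Real.sq_sqrt (mul_pos hp0 hq).le
  rw [sq_sqrt_add_sqrt hp0.le hq.le] at hW hW'
  have hΔ : 0 ≤ (R0 - p + q) ^ 2 - 4 * (R0 * q) := by
    rw [overCapacity_discrim_eq]; nlinarith [Real.sqrt_nonneg (p * q)]
  ext y
  rw [overCapacityRoots, Set.mem_ofPred_eq, Set.mem_insert_iff, Set.mem_singleton_iff,
    ← overCapacity_discrim_eq, ← root_iff_of_discrim_nonneg hΔ]
  refine ⟨fun h ↦ h.2.2, fun hy ↦ ⟨?_, ?_, hy⟩⟩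
  · refine lt_root_of_two_mul_lt ?_ ?_ hy
    · nlinarith [Real.sqrt_nonneg (p * q)]
    · simpa using mul_pos (by linarith [Real.sqrt_nonneg (p * q)]) hq
  · refine root_lt_of_lt_two_mul ?_ ?_ hy
    · linarith
    · rw [overCapacity_quadratic_at_threshold hp]
      have := mul_pos hq hM
      nlinarith

lemma overCapacityRoots_eq_singleton_of_eq (hq : 0 < q) (hM : 0 < M) (hp : p = M * (1 - q))
    (hMq : M * q < 1 - q) (hR0 : R0 = 1 + M) :
    overCapacityRoots R0 p q M = {(R0 - p + q - √((R0 - p - q) ^ 2 - 4 * p * q)) / 2} := by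
  have hΔ : (R0 - p - q) ^ 2 - 4 * p * q = (1 - q - M * q) ^ 2 := by rw [hR0, hp]; ring
  have hroot : (R0 - p + q - √((R0 - p - q) ^ 2 - 4 * p * q)) / 2 = q * (1 + M) := by
    rw [hΔ, Real.sqrt_sq (by linarith), hR0, hp]; ring
  rw [hroot]
  ext y
  simp only [overCapacityRoots, Set.mem_ofPred_eq, Set.mem_singleton_iff]
  have hfac : y ^ 2 - (R0 - p + q) * y + R0 * q = (y - 1) * (y - q * (1 + M)) := by
    rw [hR0, hp]; ring
  rw [hfac, mul_eq_zero, sub_eq_zero, sub_eq_zero, hR0, add_sub_cancel_right]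
  constructor
  · rintro ⟨_, hy1, rfl | rfl⟩
    · exact absurd hy1 (lt_irrefl 1)
    · rfl
  · rintro rfl
    exact ⟨by positivity, by linarith, Or.inr rfl⟩

lemma overCapacityRoots_eq_singleton_of_lt (hq : 0 < q) (hM : 0 < M) (hp : p = M * (1 - q))
    (hR0 : 1 + M < R0) :
    overCapacityRoots R0 p q M = {(R0 - p + q - √((R0 - p - q) ^ 2 - 4 * p * q)) / 2} := by
  have ht : (R0 - M) ^ 2 - (R0 - p + q) * (R0 - M) + R0 * q < 0 := by
    rw [overCapacity_quadratic_at_threshold hp]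
    exact mul_neg_of_pos_of_neg (mul_pos hq hM) (by linarith)
  have hΔ : 0 ≤ (R0 - p + q) ^ 2 - 4 * (R0 * q) := by
    nlinarith [sq_nonneg (2 * (R0 - M) - (R0 - p + q))]
  obtain ⟨hlt, hgt⟩ := roots_lt_and_lt_of_neg ht
  have hpos := smaller_root_pos (b := R0 - p + q) (c := R0 * q)
    (by rw [hp]; nlinarith) (by nlinarith)
  rw [← overCapacity_discrim_eq]
  ext y
  rw [overCapacityRoots, Set.mem_ofPred_eq, Set.mem_singleton_iff,
    root_iff_of_discrim_nonneg hΔ]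
  constructor
  · rintro ⟨_, hyM, rfl | rfl⟩
    · rfl
    · exact absurd hgt hyM.not_gt
  · rintro rfl
    exact ⟨hpos, hlt, Or.inl rfl⟩

end OverCapacityRoots

section Model

variable {A μ ρ r β σm σs CI R0 p q M : ℝ}

lemma isEndemicEquilibrium_and_le_iff (hμ : 0 < μ) (hr : 0 ≤ r) (hβ : 0 < β) (hσm : 0 < σm)
    (hk : 0 < μ + β + ρ) (hR0 : A * σm = R0 * (μ * (μ + β + ρ)))
    (hM : M * (μ * β) = σm * (μ + r) * CI) {x : ℝ × ℝ × ℝ} :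
    IsEndemicEquilibrium A μ ρ r β σm σs CI x ∧ x.2.2 ≤ CI ↔
      x = ((μ + β + ρ) / σm, μ * (R0 - 1) / σm, μ * β * (R0 - 1) / (σm * (μ + r))) ∧
        1 < R0 ∧ R0 ≤ 1 + M := by
  obtain ⟨S, Im, Is⟩ := x
  simp only [IsEndemicEquilibrium, Prod.mk.injEq]
  have hμr : 0 < μ + r := by linarith
  constructor
  · rintro ⟨⟨hS, hIm, hIs, e1, e2, e3⟩, hle⟩
    rw [max_eq_left (by linarith)] at e1 e2
    rw [min_eq_left (mul_le_mul_of_nonneg_left hle hr)] at e3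
    have hSk : σm * S = μ + β + ρ := by
      have h : (σm * S - (μ + β + ρ)) * Im = 0 := by linear_combination e2
      linarith [(mul_eq_zero.mp h).resolve_right hIm.ne']
    have hIm' : Im * σm = μ * (R0 - 1) := by
      refine mul_right_cancel₀ hk.ne' ?_
      linear_combination (-σm) * e1 - (σm * Im + μ) * hSk + hR0
    have hIs' : Is * (σm * (μ + r)) = μ * β * (R0 - 1) := by
      linear_combination (-σm) * e3 + β * hIm'
    have hR0gt : 1 < R0 := by nlinarith [mul_pos hIm hσm]
    refine ⟨⟨?_, ?_, ?_⟩, hR0gt, ?_⟩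
    · rw [eq_div_iff hσm.ne']; linarith
    · rw [eq_div_iff hσm.ne']; exact hIm'
    · rw [eq_div_iff (by positivity)]; exact hIs'
    · nlinarith [mul_le_mul_of_nonneg_right hle (by positivity : (0:ℝ) ≤ σm * (μ + r)),
        mul_pos hμ hβ]
  · rintro ⟨⟨rfl, rfl, rfl⟩, hR0gt, hR0le⟩
    have hle : μ * β * (R0 - 1) / (σm * (μ + r)) ≤ CI := by
      rw [div_le_iff₀ (by positivity)]
      nlinarith [mul_pos hμ hβ]
    have h1 : 0 < R0 - 1 := by linarith
    rw [max_eq_left (by linarith), min_eq_left (mul_le_mul_of_nonneg_left hle hr)]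
    refine ⟨⟨by positivity, by positivity, by positivity, ?_, ?_, ?_⟩, hle⟩
    · field_simp
      linear_combination hR0
    · field_simp
      ring
    · field_simp
      ring

noncomputable def overCapacityState (μ ρ r β σm CI R0 S : ℝ) : ℝ × ℝ × ℝ :=
  (S, μ * R0 / σm - μ * S / (μ + β + ρ), β * R0 / σm - β * S / (μ + β + ρ) - r * CI / μ)

lemma eq_overCapacityState (hμ : 0 < μ) (hr : 0 ≤ r) (hσm : 0 < σm) (hk : 0 < μ + β + ρ)
    (hR0 : A * σm = R0 * (μ * (μ + β + ρ))) {x : ℝ × ℝ × ℝ}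
    (hx : IsEndemicEquilibrium A μ ρ r β σm σs CI x) (hlt : CI < x.2.2) :
    x = overCapacityState μ ρ r β σm CI R0 x.1 := by
  obtain ⟨S, Im, Is⟩ := x
  obtain ⟨-, -, -, e1, e2, e3⟩ := hx
  rw [min_eq_right (mul_le_mul_of_nonneg_left hlt.le hr)] at e3
  have hIm : Im = μ * R0 / σm - μ * S / (μ + β + ρ) := by
    field_simp
    linear_combination (-σm) * (e1 + e2) + hR0
  simp only [overCapacityState, Prod.mk.injEq, true_and]
  have hIs : Is = (β * Im - r * CI) / μ := by
    field_simp
    linear_combination -e3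
  refine ⟨hIm, ?_⟩
  rw [hIs, hIm]
  field_simp

lemma isEndemicEquilibrium_overCapacityState_iff (hμ : 0 < μ) (hr : 0 ≤ r) (hβ : 0 < β)
    (hσm : 0 < σm) (hCI : 0 < CI) (hk : 0 < μ + β + ρ)
    (hR0 : A * σm = R0 * (μ * (μ + β + ρ))) (hq : q * (μ * σm + β * σs) = μ * σm)
    (hp : p = M * (1 - q)) (hM : M * (μ * β) = σm * (μ + r) * CI) {y : ℝ} :
    IsEndemicEquilibrium A μ ρ r β σm σs CI
        (overCapacityState μ ρ r β σm CI R0 ((μ + β + ρ) / σm * y)) ∧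
      CI < (overCapacityState μ ρ r β σm CI R0 ((μ + β + ρ) / σm * y)).2.2 ↔
      y ∈ overCapacityRoots R0 p q M := by
  have hM0 : 0 < M := by
    have : 0 < M * (μ * β) := hM ▸ by positivity
    exact pos_of_mul_pos_left this (by positivity)
  have hIm : μ * R0 / σm - μ * ((μ + β + ρ) / σm * y) / (μ + β + ρ) = μ * (R0 - y) / σm := by
    field_simp
  have hIs : β * R0 / σm - β * ((μ + β + ρ) / σm * y) / (μ + β + ρ) - r * CI / μ
      = CI + β * (R0 - M - y) / σm := by
    field_simp
    linear_combination hM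
  simp only [overCapacityState, IsEndemicEquilibrium, hIm, hIs]
  have hquadratic : σm * ((μ + β + ρ) / σm * y) * (μ * (R0 - y) / σm)
      + σs * ((μ + β + ρ) / σm * y) * (β * (R0 - M - y) / σm)
      - (μ + β + ρ) * (μ * (R0 - y) / σm)
      = -((μ + β + ρ) * (μ * σm + β * σs) / σm ^ 2) * (y ^ 2 - (R0 - p + q) * y + R0 * q) := by
    rw [hp]
    field_simp
    linear_combination (R0 - (M + 1) * y) * hq
  have hexceeds : CI < CI + β * (R0 - M - y) / σm ↔ y < R0 - M := by
    rw [lt_add_iff_pos_right, div_pos_iff_of_pos_right hσm, mul_pos_iff_of_pos_left hβ,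
      sub_pos]
  have hN : μ * σm + β * σs ≠ 0 := fun h ↦ (mul_pos hμ hσm).ne' (by rw [← hq, h, mul_zero])
  rw [hexceeds, add_sub_cancel_left]
  constructor
  · rintro ⟨⟨hS, -, -, -, e2, -⟩, hyM⟩
    rw [max_eq_right (div_nonneg (mul_nonneg hβ.le (by linarith)) hσm.le), hquadratic] at e2
    refine ⟨pos_of_mul_pos_right hS (by positivity), hyM, ?_⟩
    refine (mul_eq_zero.mp e2).resolve_left (neg_ne_zero.mpr ?_)
    exact div_ne_zero (mul_ne_zero hk.ne' hN) (by positivity)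
  · rintro ⟨hy0, hyM, hy⟩
    have hexcess : 0 < β * (R0 - M - y) / σm := div_pos (mul_pos hβ (by linarith)) hσm
    have e2 : σm * ((μ + β + ρ) / σm * y) * (μ * (R0 - y) / σm)
        + σs * ((μ + β + ρ) / σm * y) * (β * (R0 - M - y) / σm)
        - (μ + β + ρ) * (μ * (R0 - y) / σm) = 0 := by
      rw [hquadratic, hy, mul_zero]
    have hsum : A - σm * ((μ + β + ρ) / σm * y) * (μ * (R0 - y) / σm)
        - σs * ((μ + β + ρ) / σm * y) * (β * (R0 - M - y) / σm) - μ * ((μ + β + ρ) / σm * y)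
        = -(σm * ((μ + β + ρ) / σm * y) * (μ * (R0 - y) / σm)
          + σs * ((μ + β + ρ) / σm * y) * (β * (R0 - M - y) / σm)
          - (μ + β + ρ) * (μ * (R0 - y) / σm)) := by
      field_simp
      linear_combination σm * hR0
    rw [max_eq_right hexcess.le, min_eq_right (mul_le_mul_of_nonneg_left (by linarith) hr)]
    refine ⟨⟨by positivity, div_pos (mul_pos hμ (by linarith)) hσm, by positivity,
      by rw [hsum, e2, neg_zero], e2, ?_⟩, hyM⟩
    field_simp
    linear_combination hM

lemma setOf_isEndemicEquilibrium_eq (hμ : 0 < μ) (hr : 0 ≤ r) (hβ : 0 < β) (hσm : 0 < σm)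
    (hCI : 0 < CI) (hk : 0 < μ + β + ρ) (hR0 : A * σm = R0 * (μ * (μ + β + ρ)))
    (hq : q * (μ * σm + β * σs) = μ * σm) (hp : p = M * (1 - q))
    (hM : M * (μ * β) = σm * (μ + r) * CI) :
    {x | IsEndemicEquilibrium A μ ρ r β σm σs CI x} =
      {x | x = ((μ + β + ρ) / σm, μ * (R0 - 1) / σm, μ * β * (R0 - 1) / (σm * (μ + r))) ∧
          1 < R0 ∧ R0 ≤ 1 + M} ∪
        (fun y ↦ overCapacityState μ ρ r β σm CI R0 ((μ + β + ρ) / σm * y)) ''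
          overCapacityRoots R0 p q M := by
  have hover : ∀ x, (∃ y ∈ overCapacityRoots R0 p q M,
      overCapacityState μ ρ r β σm CI R0 ((μ + β + ρ) / σm * y) = x) ↔
      IsEndemicEquilibrium A μ ρ r β σm σs CI x ∧ CI < x.2.2 := by
    intro x
    constructor
    · rintro ⟨y, hy, rfl⟩
      exact (isEndemicEquilibrium_overCapacityState_iff hμ hr hβ hσm hCI hk hR0 hq hp hM).mpr hy
    · rintro ⟨hx, hlt⟩
      have hS : (μ + β + ρ) / σm * (σm / (μ + β + ρ) * x.1) = x.1 := by field_simp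
      have hx' := eq_overCapacityState hμ hr hσm hk hR0 hx hlt
      refine ⟨σm / (μ + β + ρ) * x.1, ?_, by rw [hS, ← hx']⟩
      rw [← isEndemicEquilibrium_overCapacityState_iff hμ hr hβ hσm hCI hk hR0 hq hp hM, hS,
        ← hx']
      exact ⟨hx, hlt⟩
  ext x
  rw [Set.mem_union, Set.mem_image, hover, Set.mem_ofPred_eq, Set.mem_ofPred_eq,
    ← isEndemicEquilibrium_and_le_iff (σs := σs) hμ hr hβ hσm hk hR0 hM, ← and_or_left,
    and_iff_left (le_or_gt _ _)]

lemma mul_lt_one_sub_of_lt (hμ : 0 < μ) (hμr : 0 < μ + r) (hβ : 0 < β) (hσm : 0 < σm)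
    (hσs : 0 < σs) (hq : q = μ * σm / (μ * σm + β * σs)) (hM : M = σm * (μ + r) * CI / (μ * β))
    (hhigh : CI < β ^ 2 * σs / ((μ + r) * σm ^ 2)) : M * q < 1 - q := by
  have hN : 0 < μ * σm + β * σs := by positivity
  have hMq : M * q = σm ^ 2 * (μ + r) * CI / (β * (μ * σm + β * σs)) := by
    rw [hM, hq]; field_simp
  have hq1 : 1 - q = β * σs / (μ * σm + β * σs) := by
    rw [hq]; field_simp; ring
  rw [lt_div_iff₀ (by positivity)] at hhigh
  rw [hMq, hq1, div_lt_div_iff₀ (by positivity) hN]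
  nlinarith [mul_lt_mul_of_pos_right hhigh hN]

lemma one_sub_sqrt_sq_lt (hμ : 0 < μ) (hμr : 0 < μ + r) (hβ : 0 < β) (hσm : 0 < σm)
    (hσs : 0 < σs) (hp : p = (μ + r) * σm * σs * CI / (μ * (μ * σm + β * σs)))
    (hq : q = μ * σm / (μ * σm + β * σs))
    (hlow : μ ^ 2 / (μ + r) * (√(β / (μ * σm) + 1 / σs) - √(1 / σs)) ^ 2 < CI) :
    (1 - √q) ^ 2 < p := by
  have hq0 : 0 < q := hq ▸ by positivity
  have hs : 0 < √q := Real.sqrt_pos.mpr hq0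
  have hsplit : β / (μ * σm) + 1 / σs = (1 / σs) / q := by rw [hq]; field_simp; ring
  have hK : 0 < μ ^ 2 / ((μ + r) * σs * q) := by positivity
  have hlow' : (1 - √q) ^ 2 * (μ ^ 2 / ((μ + r) * σs * q)) < CI := by
    have hsq : (√(1 / σs) / √q - √(1 / σs)) ^ 2 = √(1 / σs) ^ 2 * (1 - √q) ^ 2 / √q ^ 2 := by
      field_simp
    rw [hsplit, Real.sqrt_div' _ hq0.le, hsq, Real.sq_sqrt (by positivity),
      Real.sq_sqrt hq0.le] at hlow
    convert hlow using 1
    field_simp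
  have hp' : p = CI / (μ ^ 2 / ((μ + r) * σs * q)) := by rw [hp, hq]; field_simp
  rw [hp', lt_div_iff₀ hK]
  exact hlow'

end Model

theorem stmt11_general (A μ ρ r β σm σs CI : ℝ)
    (hμ : 0 < μ) (hρ : 0 < ρ) (hr : 0 < r) (hβ : 0 < β)
    (hσm : 0 < σm) (hσs : 0 < σs) (hCI : 0 < CI)
    (R0 p q M : ℝ)
    (hR0 : R0 = A * σm / (μ * (μ + β + ρ)))
    (hp : p = (μ + r) * σm * σs * CI / (μ * (μ * σm + β * σs)))
    (hq : q = μ * σm / (μ * σm + β * σs))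
    (hM : M = σm * (μ + r) * CI / (μ * β))
    (hlow : μ ^ 2 / (μ + r)
      * (Real.sqrt (β / (μ * σm) + 1 / σs) - Real.sqrt (1 / σs)) ^ 2 < CI)
    (hhigh : CI < β ^ 2 * σs / ((μ + r) * σm ^ 2))
    (D1 S1 S2 : ℝ)
    (hD1 : D1 = (R0 - p - q) ^ 2 - 4 * p * q)
    (hS1 : S1 = (μ + β + ρ) / (2 * σm) * (R0 - p + q - Real.sqrt D1))
    (hS2 : S2 = (μ + β + ρ) / (2 * σm) * (R0 - p + q + Real.sqrt D1))
    (Estar E1 E2 : ℝ × ℝ × ℝ)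
    (hEstar : Estar = ((μ + β + ρ) / σm, μ * (R0 - 1) / σm,
      μ * β * (R0 - 1) / (σm * (μ + r))))
    (hE1 : E1 = (S1, μ * R0 / σm - μ * S1 / (μ + β + ρ),
      β * R0 / σm - β * S1 / (μ + β + ρ) - r * CI / μ))
    (hE2 : E2 = (S2, μ * R0 / σm - μ * S2 / (μ + β + ρ),
      β * R0 / σm - β * S2 / (μ + β + ρ) - r * CI / μ)) :
    (1 < R0 → R0 < (Real.sqrt p + Real.sqrt q) ^ 2 →
      {x : ℝ × ℝ × ℝ | IsEndemicEquilibrium A μ ρ r β σm σs CI x} = {Estar}) ∧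
    ((Real.sqrt p + Real.sqrt q) ^ 2 ≤ R0 → R0 < 1 + M →
      {x : ℝ × ℝ × ℝ | IsEndemicEquilibrium A μ ρ r β σm σs CI x}
        = {Estar, E1, E2}) ∧
    (R0 = 1 + M →
      {x : ℝ × ℝ × ℝ | IsEndemicEquilibrium A μ ρ r β σm σs CI x}
        = {Estar, E1}) ∧
    (R0 > 1 + M →
      {x : ℝ × ℝ × ℝ | IsEndemicEquilibrium A μ ρ r β σm σs CI x} = {E1}) := by
  have hk : 0 < μ + β + ρ := by positivity
  have hμr : 0 < μ + r := by positivity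
  have hq0 : 0 < q := hq ▸ by positivity
  have hM0 : 0 < M := hM ▸ by positivity
  have hpM : p = M * (1 - q) := by rw [hp, hq, hM]; field_simp; ring
  have hMq := mul_lt_one_sub_of_lt hμ hμr hβ hσm hσs hq hM hhigh
  have hq1 : q ≤ 1 := by nlinarith [mul_pos hM0 hq0]
  have hW1 := one_lt_sq_sqrt_add_sqrt (one_sub_sqrt_sq_lt hμ hμr hβ hσm hσs hp hq hlow)
  have hWM := sq_sqrt_add_sqrt_lt_one_add hq0 hM0 hpM hMq
  have hE1' : E1 = overCapacityState μ ρ r β σm CI R0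
      ((μ + β + ρ) / σm * ((R0 - p + q - √((R0 - p - q) ^ 2 - 4 * p * q)) / 2)) := by
    rw [hE1, hS1, hD1, overCapacityState]; ring_nf
  have hE2' : E2 = overCapacityState μ ρ r β σm CI R0
      ((μ + β + ρ) / σm * ((R0 - p + q + √((R0 - p - q) ^ 2 - 4 * p * q)) / 2)) := by
    rw [hE2, hS2, hD1, overCapacityState]; ring_nf
  have hR0' : A * σm = R0 * (μ * (μ + β + ρ)) := by rw [hR0]; field_simp
  have hq' : q * (μ * σm + β * σs) = μ * σm := by rw [hq]; field_simp
  have hM' : M * (μ * β) = σm * (μ + r) * CI := by rw [hM]; field_simp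
  rw [setOf_isEndemicEquilibrium_eq hμ hr.le hβ hσm hCI hk hR0' hq' hpM hM', ← hEstar, hE1', hE2']
  refine ⟨fun h1 h2 ↦ ?_, fun h1 h2 ↦ ?_, fun h ↦ ?_, fun h ↦ ?_⟩
  · rw [overCapacityRoots_eq_empty hq0 hq1 hM0 hpM h2 (by linarith)]
    simp only [h1, (h2.trans hWM).le, and_self, and_true, Set.ofPred_eq_eq_singleton,
      Set.image_empty, Set.union_empty]
  · rw [overCapacityRoots_eq_pair hq0 hM0 hpM hMq h1 h2]
    simp only [hW1.trans_le h1, h2.le, and_self, and_true, Set.ofPred_eq_eq_singleton,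
      Set.image_pair, Set.singleton_union]
  · rw [overCapacityRoots_eq_singleton_of_eq hq0 hM0 hpM hMq h]
    simp only [h.le, show 1 < R0 by linarith, and_self, and_true, Set.ofPred_eq_eq_singleton,
      Set.image_singleton, Set.singleton_union]
  · rw [overCapacityRoots_eq_singleton_of_lt hq0 hM0 hpM h]
    simp only [not_le.mpr h, and_false, Set.ofPred_false, Set.empty_union, Set.image_singleton]

/-- Theorem 2.2 of the paper. -/
theorem stmt11 (A μ ρ r β σm σs CI : ℝ)
    (hA : 0 < A) (hμ : 0 < μ) (hρ : 0 < ρ) (hr : 0 < r) (hβ : 0 < β)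
    (hσm : 0 < σm) (hσs : 0 < σs) (hCI : 0 < CI)
    (R0 p q M : ℝ)
    (hR0 : R0 = A * σm / (μ * (μ + β + ρ)))
    (hp : p = (μ + r) * σm * σs * CI / (μ * (μ * σm + β * σs)))
    (hq : q = μ * σm / (μ * σm + β * σs))
    (hM : M = σm * (μ + r) * CI / (μ * β))
    (hsmall : CI < β * A / ((μ + r) * (μ + r + ρ)))
    (hlow : μ ^ 2 / (μ + r)
      * (Real.sqrt (β / (μ * σm) + 1 / σs) - Real.sqrt (1 / σs)) ^ 2 < CI)
    (hhigh : CI < β ^ 2 * σs / ((μ + r) * σm ^ 2))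
    (D1 S1 S2 : ℝ)
    (hD1 : D1 = (R0 - p - q) ^ 2 - 4 * p * q)
    (hS1 : S1 = (μ + β + ρ) / (2 * σm) * (R0 - p + q - Real.sqrt D1))
    (hS2 : S2 = (μ + β + ρ) / (2 * σm) * (R0 - p + q + Real.sqrt D1))
    (Estar E1 E2 : ℝ × ℝ × ℝ)
    (hEstar : Estar = ((μ + β + ρ) / σm, μ * (R0 - 1) / σm,
      μ * β * (R0 - 1) / (σm * (μ + r))))
    (hE1 : E1 = (S1, μ * R0 / σm - μ * S1 / (μ + β + ρ),
      β * R0 / σm - β * S1 / (μ + β + ρ) - r * CI / μ))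
    (hE2 : E2 = (S2, μ * R0 / σm - μ * S2 / (μ + β + ρ),
      β * R0 / σm - β * S2 / (μ + β + ρ) - r * CI / μ)) :
    (1 < R0 → R0 < (Real.sqrt p + Real.sqrt q) ^ 2 →
      {x : ℝ × ℝ × ℝ | IsEndemicEquilibrium A μ ρ r β σm σs CI x} = {Estar}) ∧
    ((Real.sqrt p + Real.sqrt q) ^ 2 ≤ R0 → R0 < 1 + M →
      {x : ℝ × ℝ × ℝ | IsEndemicEquilibrium A μ ρ r β σm σs CI x}
        = {Estar, E1, E2}) ∧
    (R0 = 1 + M →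
      {x : ℝ × ℝ × ℝ | IsEndemicEquilibrium A μ ρ r β σm σs CI x}
        = {Estar, E1}) ∧
    (R0 > 1 + M →
      {x : ℝ × ℝ × ℝ | IsEndemicEquilibrium A μ ρ r β σm σs CI x} = {E1}) :=
  stmt11_general A μ ρ r β σm σs CI hμ hρ hr hβ hσm hσs hCI R0 p q M hR0 hp hq hM hlow hhigh D1 S1
    S2 hD1 hS1 hS2 Estar E1 E2 hEstar hE1 hE2
end

section
/- Suppose C_I < βA/((μ+r)(μ+r+ρ)) and C_I ≤ (μ²/(μ+r))·(√(β/(μσm) + 1/σs) − √(1/σs))². Define E* = ((μ+β+ρ)/σm, μ(R0−1)/σm, μβ(R0−1)/(σm(μ+r))) and, for i = 1, 2, Ei = (Si, μR0/σm − μSi/(μ+β+ρ), βR0/σm − βSi/(μ+β+ρ) − rC_I/μ) with S1 = ((μ+β+ρ)/(2σm))(R0 − p + q − √D1), S2 = ((μ+β+ρ)/(2σm))(R0 − p + q + √D1), D1 = (R0−p−q)² − 4pq. Then: if (√p+√q)² ≤ R0 ≤ 1, the set of endemic equilibria equals {E1, E2} (E* is not an endemic equilibrium); if 1 < R0 < 1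 + M, it equals {E*, E1, E2}; if R0 = 1 + M, it equals {E*, E1}; and if R0 > 1 + M, it equals {E1}. -/
open Real

lemma sq_sub_mul_add_eq_zero_iff {b c z : ℝ} :
    z ^ 2 - b * z + c = 0 ↔ 0 ≤ b ^ 2 - 4 * c ∧
      (z = (b - √(b ^ 2 - 4 * c)) / 2 ∨ z = (b + √(b ^ 2 - 4 * c)) / 2) := by
  have hform : z ^ 2 - b * z + c = 1 * (z * z) + -b * z + c := by ring
  have hroots (hD : 0 ≤ b ^ 2 - 4 * c) :=
    quadratic_eq_zero_iff (a := 1) (b := -b) (c := c) one_ne_zero (s := √(b ^ 2 - 4 * c))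
      (by rw [discrim, mul_self_sqrt hD]; ring) z
  constructor
  · intro h
    have hD : 0 ≤ b ^ 2 - 4 * c := by nlinarith [sq_nonneg (2 * z - b)]
    refine ⟨hD, ?_⟩
    rw [hform, hroots hD] at h
    rcases h with h | h
    · right; rw [h]; ring
    · left; rw [h]; ring
  · rintro ⟨hD, hz⟩
    rw [hform, hroots hD]
    rcases hz with h | h
    · right; rw [h]; ring
    · left; rw [h]; ring

def severeRoots (R0 p q M : ℝ) : Set ℝ :=
  {z | 0 < z ∧ z < R0 - M ∧ z ^ 2 - (R0 - p + q) * z + R0 * q = 0}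

section RootLocation

variable {R0 p q M : ℝ}

lemma discr_nonneg_of_sq_sqrt_add_sqrt_le (hp : 0 ≤ p) (hq : 0 ≤ q)
    (h : (√p + √q) ^ 2 ≤ R0) : 0 ≤ (R0 - p - q) ^ 2 - 4 * p * q := by
  have hsp := sq_sqrt hp
  have hsq := sq_sqrt hq
  have hprod : 0 ≤ √p * √q := mul_nonneg (sqrt_nonneg p) (sqrt_nonneg q)
  have hgap : 2 * (√p * √q) ≤ R0 - p - q := by nlinarith
  nlinarith

lemma add_mul_add_lt_of_sq_sqrt_add_sqrt_le (hq0 : 0 < q) (hq1 : q < 1) (hM : 0 < M)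
    (hpM : p = M * (1 - q)) (hpq : √p + √q ≤ 1) (h : (√p + √q) ^ 2 ≤ R0) :
    M * (1 + q) + q < R0 := by
  set a := √p
  set s := √q
  have ha2 : a ^ 2 = p := sq_sqrt (by rw [hpM]; nlinarith)
  have hs2 : s ^ 2 = q := sq_sqrt hq0.le
  have ha : 0 < a := sqrt_pos.2 (by rw [hpM]; nlinarith)
  have hs : 0 < s := sqrt_pos.2 hq0
  have hs1 : s < 1 := by nlinarith
  have hMs : M * s < a := by
    have h1 : a * s < 1 - s ^ 2 := by nlinarith
    nlinarith [mul_pos ha (show 0 < 1 - s ^ 2 - a * s by linarith)]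
  nlinarith [mul_lt_mul_of_pos_left hMs hs]

lemma mem_severeRoots_iff (hq0 : 0 < q) (hq1 : q < 1) (hM : 0 < M)
    (hpM : p = M * (1 - q)) (hpq : √p + √q ≤ 1) (h : (√p + √q) ^ 2 ≤ R0) {z : ℝ} :
    z ∈ severeRoots R0 p q M ↔ z = (R0 - p + q - √((R0 - p - q) ^ 2 - 4 * p * q)) / 2 ∨
      (z = (R0 - p + q + √((R0 - p - q) ^ 2 - 4 * p * q)) / 2 ∧ R0 < 1 + M) := by
  have hD : (R0 - p + q) ^ 2 - 4 * (R0 * q) = (R0 - p - q) ^ 2 - 4 * p * q := by ring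
  set D := (R0 - p - q) ^ 2 - 4 * p * q
  have hp : 0 ≤ p := by rw [hpM]; nlinarith
  have hD0 : 0 ≤ D := discr_nonneg_of_sq_sqrt_add_sqrt_le hp hq0.le h
  have hgap := add_mul_add_lt_of_sq_sqrt_add_sqrt_le hq0 hq1 hM hpM hpq h
  have hsD := sqrt_nonneg D
  have hR0 : 0 < R0 := by nlinarith [mul_pos hM hq0]
  have hsD_lt : √D < R0 - p + q := by
    rw [sqrt_lt' (by nlinarith)]
    nlinarith [mul_pos hR0 hq0]
  have hsD_lt_iff : √D < R0 - M * (1 + q) - q ↔ R0 < 1 + M := by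
    rw [sqrt_lt' (by linarith)]
    have : (R0 - M * (1 + q) - q) ^ 2 - D = 4 * (q * M) * (1 + M - R0) := by
      simp only [D, hpM]; ring
    constructor <;> intro h' <;> nlinarith [mul_pos hq0 hM]
  simp only [severeRoots, Set.mem_ofPred_eq, sq_sub_mul_add_eq_zero_iff, hD]
  constructor
  · rintro ⟨-, hzM, -, rfl | rfl⟩
    · exact Or.inl rfl
    · exact Or.inr ⟨rfl, hsD_lt_iff.1 (by rw [hpM] at hzM; linarith)⟩
  · rintro (rfl | ⟨rfl, hR⟩)
    · refine ⟨by linarith, ?_, hD0, Or.inl rfl⟩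
      rw [hpM]; linarith
    · refine ⟨by linarith, ?_, hD0, Or.inr rfl⟩
      have := hsD_lt_iff.2 hR
      rw [hpM]; linarith

end RootLocation

section Parameters

variable {μ r β σm σs CI p q M : ℝ}

lemma q_pos_and_lt_one (hμ : 0 < μ) (hβ : 0 < β) (hσm : 0 < σm) (hσs : 0 < σs)
    (hq : q = μ * σm / (μ * σm + β * σs)) : 0 < q ∧ q < 1 := by
  rw [hq, div_lt_one (by positivity)]
  exact ⟨by positivity, by linarith [mul_pos hβ hσs]⟩

lemma p_eq_mul_one_sub_q (hμ : 0 < μ) (hβ : 0 < β) (hσm : 0 < σm) (hσs : 0 < σs)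
    (hp : p = (μ + r) * σm * σs * CI / (μ * (μ * σm + β * σs)))
    (hq : q = μ * σm / (μ * σm + β * σs)) (hM : M = σm * (μ + r) * CI / (μ * β)) :
    p = M * (1 - q) := by
  subst hp hq hM
  field_simp
  ring

lemma sqrt_add_sqrt_le_one (hμ : 0 < μ) (hr : 0 < r) (hβ : 0 < β) (hσm : 0 < σm)
    (hσs : 0 < σs) (hp : p = (μ + r) * σm * σs * CI / (μ * (μ * σm + β * σs)))
    (hq : q = μ * σm / (μ * σm + β * σs))
    (hlow : CI ≤ μ ^ 2 / (μ + r) * (√(β / (μ * σm) + 1 / σs) - √(1 / σs)) ^ 2) :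
    √p + √q ≤ 1 := by
  obtain ⟨hq0, hq1⟩ := q_pos_and_lt_one hμ hβ hσm hσs hq
  set s := √q
  set t := √(1 / σs)
  have hs : 0 < s := sqrt_pos.2 hq0
  have hs2 : s ^ 2 = q := sq_sqrt hq0.le
  have hs1 : s < 1 := by nlinarith
  have ht2 : t ^ 2 = 1 / σs := sq_sqrt (by positivity)
  have hsqrt : √(β / (μ * σm) + 1 / σs) = t / s := by
    rw [show β / (μ * σm) + 1 / σs = 1 / σs / q by rw [hq]; field_simp; ring, sqrt_div' _ hq0.le]
  have hp' : p = (μ + r) * σs * s ^ 2 / μ ^ 2 * CI := by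
    rw [hp, hs2, hq]; field_simp
  have hple : p ≤ (1 - s) ^ 2 :=
    calc p = (μ + r) * σs * s ^ 2 / μ ^ 2 * CI := hp'
      _ ≤ (μ + r) * σs * s ^ 2 / μ ^ 2 * (μ ^ 2 / (μ + r) * (t / s - t) ^ 2) := by
        rw [← hsqrt]; gcongr
      _ = σs * t ^ 2 * (1 - s) ^ 2 := by field_simp
      _ = (1 - s) ^ 2 := by rw [ht2]; field_simp
  linarith [(sqrt_le_left (by linarith)).2 hple]

end Parameters

noncomputable def severeBranch (μ ρ r β σm CI R0 z : ℝ) : ℝ × ℝ × ℝ :=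
  ((μ + β + ρ) * z / σm, μ * (R0 - z) / σm, β * (R0 - z) / σm - r * CI / μ)

section Equilibria

variable {A μ ρ r β σm σs CI R0 p q M : ℝ}

lemma eq_of_isEndemicEquilibrium_of_le (hμ : 0 < μ) (hβ : 0 < β) (hρ : 0 < ρ) (hr : 0 < r)
    (hσm : 0 < σm) (hR0 : R0 = A * σm / (μ * (μ + β + ρ)))
    (hM : M = σm * (μ + r) * CI / (μ * β)) {x : ℝ × ℝ × ℝ}
    (hx : IsEndemicEquilibrium A μ ρ r β σm σs CI x) (hle : x.2.2 ≤ CI) :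
    x = ((μ + β + ρ) / σm, μ * (R0 - 1) / σm, μ * β * (R0 - 1) / (σm * (μ + r))) ∧
      1 < R0 ∧ R0 ≤ 1 + M := by
  obtain ⟨S, Im, Is⟩ := x
  obtain ⟨-, hIm, -, e1, e2, e3⟩ := hx
  dsimp only at hle hIm e1 e2 e3
  rw [max_eq_left (by linarith)] at e1 e2
  rw [min_eq_left (by gcongr)] at e3
  have hS : S = (μ + β + ρ) / σm := by
    have : (σm * S - (μ + β + ρ)) * Im = 0 := by linarith
    rw [eq_div_iff hσm.ne']
    linarith [(mul_eq_zero.1 this).resolve_right hIm.ne']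
  have hIm' : Im = μ * (R0 - 1) / σm := by
    subst hS hR0
    field_simp at e1 ⊢
    linarith
  have hIs : Is = μ * β * (R0 - 1) / (σm * (μ + r)) := by
    rw [hIm'] at e3
    field_simp at e3 ⊢
    linarith
  have hR0 : 1 < R0 := by
    rw [hIm'] at hIm
    nlinarith [div_pos_iff_of_pos_right hσm |>.1 hIm]
  refine ⟨by rw [hS, hIm', hIs], hR0, ?_⟩
  rw [hIs, div_le_iff₀ (by positivity)] at hle
  rw [hM, ← sub_le_iff_le_add', le_div_iff₀ (by positivity)]
  linarith

lemma isEndemicEquilibrium_of_one_lt_of_le (hμ : 0 < μ) (hβ : 0 < β) (hρ : 0 < ρ) (hr : 0 < r)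
    (hσm : 0 < σm) (hR0 : R0 = A * σm / (μ * (μ + β + ρ)))
    (hM : M = σm * (μ + r) * CI / (μ * β)) (h1 : 1 < R0) (h2 : R0 ≤ 1 + M) :
    IsEndemicEquilibrium A μ ρ r β σm σs CI
      ((μ + β + ρ) / σm, μ * (R0 - 1) / σm, μ * β * (R0 - 1) / (σm * (μ + r))) := by
  have hR0pos : 0 < R0 - 1 := sub_pos.2 h1
  have hIs : μ * β * (R0 - 1) / (σm * (μ + r)) ≤ CI := by
    rw [hM, ← sub_le_iff_le_add', le_div_iff₀ (by positivity)] at h2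
    rw [div_le_iff₀ (by positivity)]
    linarith
  refine ⟨by positivity, by positivity, by positivity, ?_, ?_, ?_⟩ <;> dsimp only
  · rw [max_eq_left (by linarith), hR0]; field_simp; ring
  · rw [max_eq_left (by linarith)]; field_simp; ring
  · rw [min_eq_left (by gcongr)]; field_simp; ring

lemma eq_severeBranch_of_isEndemicEquilibrium (hμ : 0 < μ) (hβ : 0 < β) (hρ : 0 < ρ)
    (hr : 0 < r) (hσm : 0 < σm) (hR0 : R0 = A * σm / (μ * (μ + β + ρ))) {x : ℝ × ℝ × ℝ}
    (hx : IsEndemicEquilibrium A μ ρ r β σm σs CI x) (hlt : CI < x.2.2) :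
    x = severeBranch μ ρ r β σm CI R0 (σm * x.1 / (μ + β + ρ)) := by
  obtain ⟨S, Im, Is⟩ := x
  obtain ⟨-, -, -, e1, e2, e3⟩ := hx
  dsimp only at hlt e1 e2 e3
  rw [min_eq_right (by gcongr)] at e3
  have hIm : (μ + β + ρ) * Im = A - μ * S := by linarith
  have hIs : μ * Is = β * Im - r * CI := by linarith
  simp only [severeBranch, Prod.mk.injEq]
  subst hR0
  refine ⟨by field_simp, ?_, ?_⟩
  · field_simp
    linarith
  · field_simp
    linear_combination (μ + β + ρ) * hIs + β * hIm

lemma mk_eq_severeBranch (hμ : 0 < μ) (hβ : 0 < β) (hρ : 0 < ρ) (hσm : 0 < σm) (S : ℝ) :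
    (S, μ * R0 / σm - μ * S / (μ + β + ρ), β * R0 / σm - β * S / (μ + β + ρ) - r * CI / μ) =
      severeBranch μ ρ r β σm CI R0 (σm * S / (μ + β + ρ)) := by
  simp only [severeBranch, Prod.mk.injEq]
  refine ⟨?_, ?_, ?_⟩ <;> field_simp

lemma severeBranch_snd_snd_sub (hμ : 0 < μ) (hβ : 0 < β) (hσm : 0 < σm)
    (hM : M = σm * (μ + r) * CI / (μ * β)) (z : ℝ) :
    (severeBranch μ ρ r β σm CI R0 z).2.2 - CI = β / σm * (R0 - M - z) := by
  simp only [severeBranch, hM]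
  field_simp
  ring

lemma isEndemicEquilibrium_severeBranch_iff (hμ : 0 < μ) (hβ : 0 < β) (hρ : 0 < ρ)
    (hr : 0 < r) (hσm : 0 < σm) (hσs : 0 < σs) (hCI : 0 < CI)
    (hR0 : R0 = A * σm / (μ * (μ + β + ρ)))
    (hp : p = (μ + r) * σm * σs * CI / (μ * (μ * σm + β * σs)))
    (hq : q = μ * σm / (μ * σm + β * σs)) (hM : M = σm * (μ + r) * CI / (μ * β))
    {z : ℝ} (hz : z < R0 - M) :
    IsEndemicEquilibrium A μ ρ r β σm σs CI (severeBranch μ ρ r β σm CI R0 z) ↔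
      0 < z ∧ z ^ 2 - (R0 - p + q) * z + R0 * q = 0 := by
  have hIs := severeBranch_snd_snd_sub (R0 := R0) (ρ := ρ) hμ hβ hσm hM z
  have hM0 : 0 < M := by rw [hM]; positivity
  have hCI_lt : CI < (severeBranch μ ρ r β σm CI R0 z).2.2 := by
    rw [← sub_pos, hIs]
    exact mul_pos (div_pos hβ hσm) (by linarith)
  have hsum : A - μ * ((μ + β + ρ) * z / σm) - (μ + β + ρ) * (μ * (R0 - z) / σm) = 0 := by
    subst hR0; field_simp; ring
  have hquad : σm * ((μ + β + ρ) * z / σm) * (μ * (R0 - z) / σm)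
      + σs * ((μ + β + ρ) * z / σm) * (β / σm * (R0 - M - z))
      - (μ + β + ρ) * (μ * (R0 - z) / σm)
      = -((μ + β + ρ) * (μ * σm + β * σs) / σm ^ 2) * (z ^ 2 - (R0 - p + q) * z + R0 * q) := by
    subst hp hq hM; field_simp; ring
  have hcoef : -((μ + β + ρ) * (μ * σm + β * σs) / σm ^ 2) ≠ 0 := by
    apply neg_ne_zero.2; positivity
  unfold IsEndemicEquilibrium
  rw [max_eq_right (sub_nonneg.2 hCI_lt.le), min_eq_right (by gcongr), hIs]
  simp only [severeBranch] at hCI_lt ⊢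
  constructor
  · rintro ⟨hS, -, -, -, e2, -⟩
    refine ⟨pos_of_mul_pos_right (div_pos_iff_of_pos_right hσm |>.1 hS) (by positivity), ?_⟩
    rw [e2] at hquad
    exact ((mul_eq_zero.1 hquad.symm).resolve_left hcoef)
  · rintro ⟨hz0, hz2⟩
    rw [hz2, mul_zero] at hquad
    refine ⟨by positivity, div_pos (by nlinarith) hσm, by linarith, by linarith, hquad, ?_⟩
    field_simp
    ring

lemma isEndemicEquilibrium_iff (hμ : 0 < μ) (hβ : 0 < β) (hρ : 0 < ρ)
    (hr : 0 < r) (hσm : 0 < σm) (hσs : 0 < σs) (hCI : 0 < CI)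
    (hR0 : R0 = A * σm / (μ * (μ + β + ρ)))
    (hp : p = (μ + r) * σm * σs * CI / (μ * (μ * σm + β * σs)))
    (hq : q = μ * σm / (μ * σm + β * σs)) (hM : M = σm * (μ + r) * CI / (μ * β))
    (x : ℝ × ℝ × ℝ) :
    IsEndemicEquilibrium A μ ρ r β σm σs CI x ↔
      (x = ((μ + β + ρ) / σm, μ * (R0 - 1) / σm, μ * β * (R0 - 1) / (σm * (μ + r))) ∧
        1 < R0 ∧ R0 ≤ 1 + M) ∨
      ∃ z ∈ severeRoots R0 p q M, x = severeBranch μ ρ r β σm CI R0 z := by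
  constructor
  · intro hx
    rcases le_or_gt x.2.2 CI with hle | hlt
    · exact Or.inl (eq_of_isEndemicEquilibrium_of_le hμ hβ hρ hr hσm hR0 hM hx hle)
    · have hxz := eq_severeBranch_of_isEndemicEquilibrium hμ hβ hρ hr hσm hR0 hx hlt
      set z := σm * x.1 / (μ + β + ρ)
      have hz : z < R0 - M := by
        rw [hxz, ← sub_pos, severeBranch_snd_snd_sub hμ hβ hσm hM] at hlt
        linarith [pos_of_mul_pos_right hlt (div_pos hβ hσm).le]
      rw [hxz, isEndemicEquilibrium_severeBranch_iff hμ hβ hρ hr hσm hσs hCI hR0 hp hq hM hz]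
        at hx
      exact Or.inr ⟨z, ⟨hx.1, hz, hx.2⟩, hxz⟩
  · rintro (⟨rfl, h1, h2⟩ | ⟨z, ⟨hz0, hz, hz2⟩, rfl⟩)
    · exact isEndemicEquilibrium_of_one_lt_of_le hμ hβ hρ hr hσm hR0 hM h1 h2
    · exact (isEndemicEquilibrium_severeBranch_iff hμ hβ hρ hr hσm hσs hCI hR0 hp hq hM hz).2
        ⟨hz0, hz2⟩

end Equilibria

theorem stmt12_general (A μ ρ r β σm σs CI : ℝ)
    (hμ : 0 < μ) (hρ : 0 < ρ) (hr : 0 < r) (hβ : 0 < β)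
    (hσm : 0 < σm) (hσs : 0 < σs) (hCI : 0 < CI)
    (R0 p q M : ℝ)
    (hR0 : R0 = A * σm / (μ * (μ + β + ρ)))
    (hp : p = (μ + r) * σm * σs * CI / (μ * (μ * σm + β * σs)))
    (hq : q = μ * σm / (μ * σm + β * σs))
    (hM : M = σm * (μ + r) * CI / (μ * β))
    (hlow : CI ≤ μ ^ 2 / (μ + r)
      * (Real.sqrt (β / (μ * σm) + 1 / σs) - Real.sqrt (1 / σs)) ^ 2)
    (D1 S1 S2 : ℝ)
    (hD1 : D1 = (R0 - p - q) ^ 2 - 4 * p * q)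
    (hS1 : S1 = (μ + β + ρ) / (2 * σm) * (R0 - p + q - Real.sqrt D1))
    (hS2 : S2 = (μ + β + ρ) / (2 * σm) * (R0 - p + q + Real.sqrt D1))
    (Estar E1 E2 : ℝ × ℝ × ℝ)
    (hEstar : Estar = ((μ + β + ρ) / σm, μ * (R0 - 1) / σm,
      μ * β * (R0 - 1) / (σm * (μ + r))))
    (hE1 : E1 = (S1, μ * R0 / σm - μ * S1 / (μ + β + ρ),
      β * R0 / σm - β * S1 / (μ + β + ρ) - r * CI / μ))
    (hE2 : E2 = (S2, μ * R0 / σm - μ * S2 / (μ + β + ρ),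
      β * R0 / σm - β * S2 / (μ + β + ρ) - r * CI / μ)) :
    ((Real.sqrt p + Real.sqrt q) ^ 2 ≤ R0 → R0 ≤ 1 →
      {x : ℝ × ℝ × ℝ | IsEndemicEquilibrium A μ ρ r β σm σs CI x} = {E1, E2} ∧
      ¬ IsEndemicEquilibrium A μ ρ r β σm σs CI Estar) ∧
    (1 < R0 → R0 < 1 + M →
      {x : ℝ × ℝ × ℝ | IsEndemicEquilibrium A μ ρ r β σm σs CI x}
        = {Estar, E1, E2}) ∧
    (R0 = 1 + M →
      {x : ℝ × ℝ × ℝ | IsEndemicEquilibrium A μ ρ r β σm σs CI x}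
        = {Estar, E1}) ∧
    (R0 > 1 + M →
      {x : ℝ × ℝ × ℝ | IsEndemicEquilibrium A μ ρ r β σm σs CI x} = {E1}) := by
  obtain ⟨hq0, hq1⟩ := q_pos_and_lt_one hμ hβ hσm hσs hq
  have hM0 : 0 < M := by rw [hM]; positivity
  have hpM := p_eq_mul_one_sub_q hμ hβ hσm hσs hp hq hM
  have hpq := sqrt_add_sqrt_le_one hμ hr hβ hσm hσs hp hq hlow
  have hiff (h : (√p + √q) ^ 2 ≤ R0) (x : ℝ × ℝ × ℝ) :
      IsEndemicEquilibrium A μ ρ r β σm σs CI x ↔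
        (x = Estar ∧ 1 < R0 ∧ R0 ≤ 1 + M) ∨ x = E1 ∨ (R0 < 1 + M ∧ x = E2) := by
    have hz (c : ℝ) : σm * ((μ + β + ρ) / (2 * σm) * c) / (μ + β + ρ) = c / 2 := by
      field_simp
    rw [isEndemicEquilibrium_iff hμ hβ hρ hr hσm hσs hCI hR0 hp hq hM, hEstar, hE1, hE2,
      mk_eq_severeBranch hμ hβ hρ hσm, mk_eq_severeBranch hμ hβ hρ hσm, hS1, hS2, hz, hz]
    simp only [mem_severeRoots_iff hq0 hq1 hM0 hpM hpq h, ← hD1, or_and_right, exists_or,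
      and_assoc, exists_eq_left]
  have hge (h : 1 < R0) : (√p + √q) ^ 2 ≤ R0 := by
    nlinarith [sqrt_nonneg p, sqrt_nonneg q]
  refine ⟨fun h1 h2 => ⟨?_, fun hstar => ?_⟩, fun h1 h2 => ?_, fun h => ?_, fun h => ?_⟩
  · ext x
    simp [hiff h1, not_lt.2 h2, show R0 < 1 + M by linarith]
  · have hIm : 0 < μ * (R0 - 1) / σm := by simpa [hEstar] using hstar.2.1
    nlinarith [(div_pos_iff_of_pos_right hσm).1 hIm]
  · ext x; simp [hiff (hge h1), h1, h2, h2.le]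
  · ext x; simp [hiff (hge (by linarith)), h, hM0]
  · ext x; simp [hiff (hge (by linarith)), not_lt.2 h.le, not_le.2 h]

/-- Theorem 2.3 of the paper. -/
theorem stmt12 (A μ ρ r β σm σs CI : ℝ)
    (hA : 0 < A) (hμ : 0 < μ) (hρ : 0 < ρ) (hr : 0 < r) (hβ : 0 < β)
    (hσm : 0 < σm) (hσs : 0 < σs) (hCI : 0 < CI)
    (R0 p q M : ℝ)
    (hR0 : R0 = A * σm / (μ * (μ + β + ρ)))
    (hp : p = (μ + r) * σm * σs * CI / (μ * (μ * σm + β * σs)))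
    (hq : q = μ * σm / (μ * σm + β * σs))
    (hM : M = σm * (μ + r) * CI / (μ * β))
    (hsmall : CI < β * A / ((μ + r) * (μ + r + ρ)))
    (hlow : CI ≤ μ ^ 2 / (μ + r)
      * (Real.sqrt (β / (μ * σm) + 1 / σs) - Real.sqrt (1 / σs)) ^ 2)
    (D1 S1 S2 : ℝ)
    (hD1 : D1 = (R0 - p - q) ^ 2 - 4 * p * q)
    (hS1 : S1 = (μ + β + ρ) / (2 * σm) * (R0 - p + q - Real.sqrt D1))
    (hS2 : S2 = (μ + β + ρ) / (2 * σm) * (R0 - p + q + Real.sqrt D1))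
    (Estar E1 E2 : ℝ × ℝ × ℝ)
    (hEstar : Estar = ((μ + β + ρ) / σm, μ * (R0 - 1) / σm,
      μ * β * (R0 - 1) / (σm * (μ + r))))
    (hE1 : E1 = (S1, μ * R0 / σm - μ * S1 / (μ + β + ρ),
      β * R0 / σm - β * S1 / (μ + β + ρ) - r * CI / μ))
    (hE2 : E2 = (S2, μ * R0 / σm - μ * S2 / (μ + β + ρ),
      β * R0 / σm - β * S2 / (μ + β + ρ) - r * CI / μ)) :
    ((Real.sqrt p + Real.sqrt q) ^ 2 ≤ R0 → R0 ≤ 1 →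
      {x : ℝ × ℝ × ℝ | IsEndemicEquilibrium A μ ρ r β σm σs CI x} = {E1, E2} ∧
      ¬ IsEndemicEquilibrium A μ ρ r β σm σs CI Estar) ∧
    (1 < R0 → R0 < 1 + M →
      {x : ℝ × ℝ × ℝ | IsEndemicEquilibrium A μ ρ r β σm σs CI x}
        = {Estar, E1, E2}) ∧
    (R0 = 1 + M →
      {x : ℝ × ℝ × ℝ | IsEndemicEquilibrium A μ ρ r β σm σs CI x}
        = {Estar, E1}) ∧
    (R0 > 1 + M →
      {x : ℝ × ℝ × ℝ | IsEndemicEquilibrium A μ ρ r β σm σs CI x} = {E1}) :=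
  stmt12_general A μ ρ r β σm σs CI hμ hρ hr hβ hσm hσs hCI R0 p q M hR0 hp hq hM hlow D1 S1 S2 hD1
    hS1 hS2 Estar E1 E2 hEstar hE1 hE2
end

section
/- Consider the 3×3 real matrix J0 with rows (−μ, −σmA/μ, 0), (0, σmA/μ − (μ+β+ρ), 0), (0, β, −(μ+r)) (the Jacobian of the model at the disease-free equilibrium). If R0 < 1, then every complex eigenvalue of J0 has negative real part. If R0 > 1, then J0 has a real eigenvalue that is positive. -/
/-- stability of the disease-free equilibrium, Theorem 3.1:
if `R0 < 1` every complex eigenvalue of the Jacobian at the disease-free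
equilibrium has negative real part; if `R0 > 1` it has a positive real
eigenvalue. -/
theorem stmt14 (A μ ρ r β σm σs : ℝ)
    (hA : 0 < A) (hμ : 0 < μ) (hρ : 0 < ρ) (hr : 0 < r) (hβ : 0 < β)
    (hσm : 0 < σm) (hσs : 0 < σs)
    (R0 : ℝ) (hR0 : R0 = A * σm / (μ * (μ + β + ρ)))
    (J0 : Matrix (Fin 3) (Fin 3) ℝ)
    (hJ0 : J0 = !![-μ, -(σm * A / μ), 0;
                   0, σm * A / μ - (μ + β + ρ), 0;
                   0, β, -(μ + r)]) :
    (R0 < 1 → ∀ z : ℂ, z ∈ spectrum ℂ (J0.map (Complex.ofReal ·)) → z.re < 0) ∧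
    (R0 > 1 → ∃ x : ℝ, 0 < x ∧ x ∈ spectrum ℝ J0) := by
  subst hR0 hJ0
  set a : ℝ := σm * A / μ - (μ + β + ρ) with ha
  have hden : 0 < μ * (μ + β + ρ) := by positivity
  constructor
  · intro hlt z hz
    have haneg : a < 0 := by
      rw [div_lt_one hden] at hlt
      rw [ha, sub_neg, div_lt_iff₀ hμ]
      nlinarith
    rw [spectrum.mem_iff, Matrix.isUnit_iff_isUnit_det, isUnit_iff_ne_zero, not_not] at hz
    have hdet : ((algebraMap ℂ (Matrix (Fin 3) (Fin 3) ℂ)) z -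
        (!![-μ, -(σm * A / μ), 0;
            0, σm * A / μ - (μ + β + ρ), 0;
            0, β, -(μ + r)] : Matrix (Fin 3) (Fin 3) ℝ).map (Complex.ofReal ·)).det
        = (z + μ) * (z - (a : ℂ)) * (z + (μ + r)) := by
      simp [Matrix.det_fin_three, Matrix.algebraMap_eq_diagonal, Matrix.diagonal_apply,
        Matrix.sub_apply, Matrix.map_apply, ha]
      left; ring
    rw [hdet] at hz
    rcases mul_eq_zero.mp hz with h | h
    · rcases mul_eq_zero.mp h with h | h
      · have : z = -(μ : ℂ) := by linear_combination h
        rw [this]; simpa using hμ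
      · have : z = (a : ℂ) := by linear_combination h
        rw [this]; simpa using haneg
    · have : z = -((μ : ℂ) + r) := by linear_combination h
      rw [this]
      simp only [Complex.neg_re, Complex.add_re, Complex.ofReal_re]
      linarith
  · intro hgt
    have hapos : 0 < a := by
      rw [gt_iff_lt, one_lt_div hden] at hgt
      rw [ha, sub_pos, lt_div_iff₀ hμ]
      nlinarith
    refine ⟨a, hapos, ?_⟩
    rw [spectrum.mem_iff, Matrix.isUnit_iff_isUnit_det, isUnit_iff_ne_zero, not_not]
    simp [Matrix.det_fin_three, Matrix.algebraMap_eq_diagonal, Matrix.diagonal_apply,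
      Matrix.sub_apply, ha]
end

section
/- Let S* = (μ+β+ρ)/σm and consider the 3×3 real matrix J with rows (−A/S*, −σm·S*, 0), (A/S* − μ, 0, 0), (0, β, −μ−r) (the Jacobian at the endemic equilibrium E*). Then the characteristic polynomial of J in the variable λ equals (λ + μ + r)·(λ² + (A/S*)·λ + μ(μ+β+ρ)(R0 − 1)). Consequently, if R0 > 1, then every complex eigenvalue of J has negative real part. -/
open Polynomial

/-!
The Jacobian is block lower triangular, so its characteristic polynomial splits off the linear
factor `λ + μ + r` from that of the upper-left `2 × 2` block, whose trace is `-A/S*` and whose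
determinant is `σm S* (A/S* - μ) = A σm - μ(μ+β+ρ) = μ(μ+β+ρ)(R0 - 1)`. When `R0 > 1` all
coefficients are positive, and a real monic quadratic with positive coefficients has only roots
in the open left half-plane: a non-real root has real part `-b/2`, and a real root `x ≥ 0` would
make `x² + b x + c` positive.
-/

theorem Matrix.charpoly_blockTriangular_fin_three {R : Type*} [CommRing R] (a b c d e f g : R) :
    (!![a, b, 0; c, d, 0; e, f, g] : Matrix (Fin 3) (Fin 3) R).charpoly =
      (X - C g) * (X ^ 2 - C (a + d) * X + C (a * d - b * c)) := by
  rw [Matrix.charpoly, Matrix.det_fin_three]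
  simp only [Matrix.charmatrix_apply_eq, Matrix.charmatrix_apply_ne, Matrix.of_apply,
    Matrix.cons_val', Matrix.cons_val_zero, Matrix.cons_val_one, Matrix.cons_val,
    Matrix.cons_val_fin_one, ne_eq, Fin.reduceEq, not_false_eq_true, map_zero, map_add,
    map_sub, map_mul]
  ring

theorem Complex.re_neg_of_sq_add_mul_add_eq_zero {b c : ℝ} (hb : 0 < b) (hc : 0 < c) {z : ℂ}
    (h : z ^ 2 + b * z + c = 0) : z.re < 0 := by
  have hre : z.re ^ 2 - z.im ^ 2 + b * z.re + c = 0 := by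
    simpa [sq] using congrArg Complex.re h
  have him : z.im * (2 * z.re + b) = 0 := by
    have := congrArg Complex.im h
    simp only [sq, add_im, mul_im, ofReal_re, ofReal_im, zero_mul, add_zero, zero_im] at this
    linear_combination this
  rcases mul_eq_zero.mp him with hreal | hhalf
  · nlinarith [sq_nonneg z.re]
  · linarith

theorem Complex.re_neg_of_isRoot_map_linear_mul_quadratic {p b c : ℝ} (hp : 0 < p)
    (hb : 0 < b) (hc : 0 < c) {z : ℂ}
    (hz : (((X + C p) * (X ^ 2 + C b * X + C c)).map ofRealHom).IsRoot z) :
    z.re < 0 := by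
  simp only [Polynomial.map_mul, IsRoot.def, eval_mul, mul_eq_zero] at hz
  rcases hz with hlin | hquad
  · simp only [Polynomial.map_add, map_X, map_C, ofRealHom_eq_coe, eval_add, eval_X,
      eval_C] at hlin
    have : z = -p := by linear_combination hlin
    simp [this, hp]
  · exact re_neg_of_sq_add_mul_add_eq_zero hb hc (by simpa using hquad)

theorem stmt15_general (A μ ρ r β σm : ℝ)
    (hA : 0 < A) (hμ : 0 < μ) (hρ : 0 < ρ) (hr : 0 < r) (hβ : 0 < β)
    (hσm : 0 < σm)
    (R0 : ℝ) (hR0 : R0 = A * σm / (μ * (μ + β + ρ)))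
    (Sstar : ℝ) (hS : Sstar = (μ + β + ρ) / σm)
    (J : Matrix (Fin 3) (Fin 3) ℝ)
    (hJ : J = !![-(A / Sstar), -(σm * Sstar), 0;
                 A / Sstar - μ, 0, 0;
                 0, β, -μ - r]) :
    J.charpoly = (X + C (μ + r))
        * (X ^ 2 + C (A / Sstar) * X + C (μ * (μ + β + ρ) * (R0 - 1))) ∧
    (R0 > 1 →
      ∀ z : ℂ, z ∈ spectrum ℂ (J.map (Complex.ofReal ·)) → z.re < 0) := by
  have hSpos : 0 < Sstar := by rw [hS]; positivity
  have hσS : σm * Sstar = μ + β + ρ := by rw [hS]; field_simp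
  have hdet : σm * Sstar * (A / Sstar - μ) = μ * (μ + β + ρ) * (R0 - 1) := by
    calc σm * Sstar * (A / Sstar - μ) = A * σm - μ * (σm * Sstar) := by field_simp
      _ = μ * (μ + β + ρ) * (R0 - 1) := by rw [hR0, hσS]; field_simp
  have hfac : J.charpoly = (X + C (μ + r))
      * (X ^ 2 + C (A / Sstar) * X + C (μ * (μ + β + ρ) * (R0 - 1))) := by
    rw [hJ, Matrix.charpoly_blockTriangular_fin_three, ← hdet]
    simp only [map_neg, map_sub, map_add, map_mul, map_zero]
    ring
  refine ⟨hfac, fun hR1 z hz => ?_⟩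
  have hmap : (J.map (Complex.ofReal ·)).charpoly = J.charpoly.map Complex.ofRealHom :=
    J.charpoly_map Complex.ofRealHom
  rw [Matrix.mem_spectrum_iff_isRoot_charpoly, hmap, hfac] at hz
  have hR0_sub : 0 < R0 - 1 := by linarith
  exact Complex.re_neg_of_isRoot_map_linear_mul_quadratic (by positivity) (by positivity)
    (by positivity) hz

/-- stability of `E*`, Theorem 3.2: the characteristic
polynomial of the Jacobian at `E*` factors as
`(λ + μ + r)(λ² + (A/S*)λ + μ(μ+β+ρ)(R0−1))`, hence for `R0 > 1` every
complex eigenvalue has negative real part. -/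
theorem stmt15 (A μ ρ r β σm σs : ℝ)
    (hA : 0 < A) (hμ : 0 < μ) (hρ : 0 < ρ) (hr : 0 < r) (hβ : 0 < β)
    (hσm : 0 < σm) (hσs : 0 < σs)
    (R0 : ℝ) (hR0 : R0 = A * σm / (μ * (μ + β + ρ)))
    (Sstar : ℝ) (hS : Sstar = (μ + β + ρ) / σm)
    (J : Matrix (Fin 3) (Fin 3) ℝ)
    (hJ : J = !![-(A / Sstar), -(σm * Sstar), 0;
                 A / Sstar - μ, 0, 0;
                 0, β, -μ - r]) :
    J.charpoly = (X + C (μ + r))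
        * (X ^ 2 + C (A / Sstar) * X + C (μ * (μ + β + ρ) * (R0 - 1))) ∧
    (R0 > 1 →
      ∀ z : ℂ, z ∈ spectrum ℂ (J.map (Complex.ofReal ·)) → z.re < 0) :=
  stmt15_general A μ ρ r β σm hA hμ hρ hr hβ hσm R0 hR0 Sstar hS J hJ
end

section
/- Suppose D1 := (R0 − p − q)² − 4pq > 0, and let S2 = ((μ+β+ρ)/(2σm))·(R0 − p + q + √D1) with S2 > 0. Consider the 3×3 real matrix J2 with rows (−A/S2, −σm·S2, −σs·S2), (A/S2 − μ, σm·S2 − μ−β−ρ, σs·S2), (0, β, −μ) (the Jacobian at E2*). Then the characteristic polynomial of J2 in λ equals (λ + μ)·(λ² + (A/S2 − σm·S2 + μ+β+ρ)·λ − (μ+β+ρ)(μσm+βσs)·√D1/σm), and J2 has a positive real eigenvalue. -/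
open Polynomial

lemma stmt16_aux (b K : ℝ) (hK : 0 < K) :
    0 < (-b + Real.sqrt (b ^ 2 + 4 * K)) / 2 ∧
      ((-b + Real.sqrt (b ^ 2 + 4 * K)) / 2) ^ 2
        + b * ((-b + Real.sqrt (b ^ 2 + 4 * K)) / 2) - K = 0 := by
  have hdisc : (0:ℝ) < b ^ 2 + 4 * K := by positivity
  have hsq : Real.sqrt (b ^ 2 + 4 * K) ^ 2 = b ^ 2 + 4 * K := Real.sq_sqrt hdisc.le
  have h1 : |b| < Real.sqrt (b ^ 2 + 4 * K) := by
    rw [← Real.sqrt_sq_eq_abs]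
    exact Real.sqrt_lt_sqrt (sq_nonneg b) (by linarith)
  have h3 : b ≤ |b| := le_abs_self b
  exact ⟨by linarith, by linear_combination hsq / 4⟩

/-- instability of `E2*`: the characteristic polynomial of the
Jacobian at `E2*` factors as stated, and the Jacobian has a positive real
eigenvalue. -/
theorem stmt16 (A μ ρ r β σm σs CI : ℝ)
    (hA : 0 < A) (hμ : 0 < μ) (hρ : 0 < ρ) (hr : 0 < r) (hβ : 0 < β)
    (hσm : 0 < σm) (hσs : 0 < σs) (hCI : 0 < CI)
    (R0 p q : ℝ)
    (hR0 : R0 = A * σm / (μ * (μ + β + ρ)))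
    (hp : p = (μ + r) * σm * σs * CI / (μ * (μ * σm + β * σs)))
    (hq : q = μ * σm / (μ * σm + β * σs))
    (D1 : ℝ) (hD1 : D1 = (R0 - p - q) ^ 2 - 4 * p * q) (hD1pos : 0 < D1)
    (S2 : ℝ) (hS2 : S2 = (μ + β + ρ) / (2 * σm) * (R0 - p + q + Real.sqrt D1))
    (hS2pos : 0 < S2)
    (J2 : Matrix (Fin 3) (Fin 3) ℝ)
    (hJ2 : J2 = !![-(A / S2), -(σm * S2), -(σs * S2);
                   A / S2 - μ, σm * S2 - μ - β - ρ, σs * S2;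
                   0, β, -μ]) :
    J2.charpoly = (X + C μ)
        * (X ^ 2 + C (A / S2 - σm * S2 + μ + β + ρ) * X
            - C ((μ + β + ρ) * (μ * σm + β * σs) * Real.sqrt D1 / σm)) ∧
    (∃ x : ℝ, 0 < x ∧ x ∈ spectrum ℝ J2) := by
  have hS2ne : S2 ≠ 0 := ne_of_gt hS2pos
  have hσmne : σm ≠ 0 := ne_of_gt hσm
  have hkpos : 0 < μ + β + ρ := by linarith
  have hBpos : 0 < μ * σm + β * σs := by positivity
  set d := Real.sqrt D1 with hd
  have hdpos : 0 < d := Real.sqrt_pos.mpr hD1pos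
  have hd2 : d ^ 2 = (R0 - p - q) ^ 2 - 4 * p * q := by
    rw [hd, Real.sq_sqrt hD1pos.le, hD1]
  have hR0' : R0 * (μ * (μ + β + ρ)) = A * σm := by
    rw [hR0]; field_simp
  have hqB : q * (μ * σm + β * σs) = μ * σm := by
    rw [hq]; field_simp
  have hS2' : 2 * σm * S2 = (μ + β + ρ) * (R0 - p + q + d) := by
    rw [hS2]; field_simp
  -- key identity for the constant coefficient
  have key : A / S2 * (μ + β + ρ) - μ * (σm * S2) - β * (σs * S2)
      = -((μ + β + ρ) * (μ * σm + β * σs) * d / σm) := by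
    have main4 : (4 * σm) * (A * σm * (μ + β + ρ)
        - (μ * σm + β * σs) * σm * S2 ^ 2
        + (μ + β + ρ) * (μ * σm + β * σs) * d * S2) = 0 := by
      linear_combination (μ * σm + β * σs) * (μ + β + ρ) ^ 2 * hd2
        - 4 * (μ + β + ρ) ^ 2 * R0 * hqB - 4 * (μ + β + ρ) * σm * hR0'
        + (2 * (μ + β + ρ) * (μ * σm + β * σs) * d
            - (μ * σm + β * σs) * (2 * σm * S2 + (μ + β + ρ) * (R0 - p + q + d))) * hS2'
    have main : A * σm * (μ + β + ρ) - (μ * σm + β * σs) * σm * S2 ^ 2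
        + (μ + β + ρ) * (μ * σm + β * σs) * d * S2 = 0 :=
      (mul_eq_zero.mp main4).resolve_left (by positivity)
    field_simp
    linear_combination main
  constructor
  · -- characteristic polynomial factorization
    have hcm : Matrix.charmatrix J2 = !![X - C (-(A / S2)), -C (-(σm * S2)), -C (-(σs * S2));
        -C (A / S2 - μ), X - C (σm * S2 - μ - β - ρ), -C (σs * S2);
        -C 0, -C β, X - C (-μ)] := by
      rw [hJ2]
      ext i j
      fin_cases i <;> fin_cases j <;>
        simp [Matrix.charmatrix_apply_eq, Matrix.charmatrix_apply_ne]
    have keyC : C (A / S2 * (μ + β + ρ) - μ * (σm * S2) - β * (σs * S2))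
        = C (-((μ + β + ρ) * (μ * σm + β * σs) * d / σm)) := congrArg C key
    rw [Matrix.charpoly, hcm, Matrix.det_fin_three]
    simp only [Matrix.cons_val_zero, Matrix.cons_val_one, Matrix.head_cons,
      Matrix.cons_val_two, Matrix.tail_cons, Matrix.head_fin_const, Matrix.of_apply,
      Matrix.cons_val']
    simp only [map_sub, map_add, map_mul, map_neg, map_zero] at keyC ⊢
    linear_combination (X + C μ) * keyC
  · -- positive eigenvalue: positive root of the quadratic factor
    have hKpos : 0 < (μ + β + ρ) * (μ * σm + β * σs) * d / σm := by positivity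
    obtain ⟨hxpos, hroot⟩ := stmt16_aux (A / S2 - σm * S2 + μ + β + ρ)
      ((μ + β + ρ) * (μ * σm + β * σs) * d / σm) hKpos
    set b := A / S2 - σm * S2 + μ + β + ρ
    set K := (μ + β + ρ) * (μ * σm + β * σs) * d / σm
    set x := (-b + Real.sqrt (b ^ 2 + 4 * K)) / 2 with hx
    refine ⟨x, hxpos, ?_⟩
    rw [spectrum.mem_iff]
    intro hu
    have hM : (algebraMap ℝ (Matrix (Fin 3) (Fin 3) ℝ) x) - J2
        = !![x + A / S2, σm * S2, σs * S2;
             -(A / S2 - μ), x - (σm * S2 - μ - β - ρ), -(σs * S2);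
             0, -β, x + μ] := by
      rw [hJ2]
      ext i j
      fin_cases i <;> fin_cases j <;>
        simp [Matrix.algebraMap_matrix_apply] <;> ring
    have hdet : ((algebraMap ℝ (Matrix (Fin 3) (Fin 3) ℝ) x) - J2).det = 0 := by
      rw [hM, Matrix.det_fin_three]
      simp only [Matrix.cons_val_zero, Matrix.cons_val_one, Matrix.head_cons,
        Matrix.cons_val_two, Matrix.tail_cons, Matrix.head_fin_const, Matrix.of_apply,
        Matrix.cons_val']
      linear_combination (x + μ) * hroot + (x + μ) * key
    exact ((Matrix.isUnit_iff_isUnit_det _).mp hu).ne_zero hdet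
end

section
/- Suppose C_I < βA/((μ+r)(μ+r+ρ)), D1 := (R0 − p − q)² − 4pq > 0, and let S1 = ((μ+β+ρ)/(2σm))·(R0 − p + q − √D1). If 0 < S1 < a, where a = ((μ+β+ρ)/σm)·(R0 − M), then A/S1 − σm·S1 + μ + β + ρ > 0. -/
/-!
Since `A / S1 > 0`, it suffices that `σm * S1 ≤ μ + β + ρ`. Writing `K = μ + β + ρ`, we have
`σm * S1 = K * x₁`, where `x₁` is the smaller root of `x² - (R0 - p + q) x + q R0`, and the
identity `p = M (1 - q)` gives the value `(1 - q)(1 + M - R0)` of this quadratic at `x = 1`.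
If `R0 ≥ M + 1` this is `≤ 0`, so `x₁ ≤ 1`; otherwise `σm * S1 < σm * a = K (R0 - M) < K`.
-/

theorem sub_sqrt_sq_sub_four_mul_le_two {b c : ℝ} (h : 1 + c ≤ b) :
    b - √(b ^ 2 - 4 * c) ≤ 2 := by
  have hsq : (b - 2) ^ 2 ≤ b ^ 2 - 4 * c := by nlinarith
  linarith [le_abs_self (b - 2), Real.abs_le_sqrt hsq]

theorem smaller_root_le_two_of_add_one_le {R0 p q M : ℝ} (hq : q ≤ 1) (hp : p = M * (1 - q))
    (hR0 : M + 1 ≤ R0) :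
    R0 - p + q - √((R0 - p - q) ^ 2 - 4 * p * q) ≤ 2 := by
  have hdisc : (R0 - p - q) ^ 2 - 4 * p * q = (R0 - p + q) ^ 2 - 4 * (q * R0) := by ring
  rw [hdisc]
  apply sub_sqrt_sq_sub_four_mul_le_two
  rw [hp]
  nlinarith

theorem mul_div_mul_add_mul_eq_div_mul_one_sub {μ β σm σs c d : ℝ} (hμ : μ ≠ 0) (hβ : β ≠ 0)
    (hden : μ * σm + β * σs ≠ 0) :
    c * σm * σs * d / (μ * (μ * σm + β * σs)) =
      σm * c * d / (μ * β) * (1 - μ * σm / (μ * σm + β * σs)) := by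
  rw [one_sub_div hden]
  field_simp
  ring

theorem stmt18_general (A μ ρ r β σm σs CI : ℝ)
    (hA : 0 < A) (hμ : 0 < μ) (hρ : 0 < ρ) (hβ : 0 < β)
    (hσm : 0 < σm) (hσs : 0 < σs)
    (R0 p q M : ℝ)
    (hp : p = (μ + r) * σm * σs * CI / (μ * (μ * σm + β * σs)))
    (hq : q = μ * σm / (μ * σm + β * σs))
    (hM : M = σm * (μ + r) * CI / (μ * β))
    (D1 : ℝ) (hD1 : D1 = (R0 - p - q) ^ 2 - 4 * p * q)
    (S1 : ℝ) (hS1 : S1 = (μ + β + ρ) / (2 * σm) * (R0 - p + q - Real.sqrt D1))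
    (a : ℝ) (ha : a = (μ + β + ρ) / σm * (R0 - M))
    (hS1pos : 0 < S1) (hS1a : S1 < a) :
    0 < A / S1 - σm * S1 + μ + β + ρ := by
  have hK : 0 < μ + β + ρ := by positivity
  have hden : 0 < μ * σm + β * σs := by positivity
  have hq1 : q ≤ 1 := by
    rw [hq, div_le_one hden]
    nlinarith
  have hpM : p = M * (1 - q) := by
    rw [hp, hq, hM]
    exact mul_div_mul_add_mul_eq_div_mul_one_sub hμ.ne' hβ.ne' hden.ne'
  have hkey : σm * S1 ≤ μ + β + ρ := by
    rcases lt_or_ge R0 (M + 1) with hR0 | hR0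
    · have hσma : σm * a = (μ + β + ρ) * (R0 - M) := by
        rw [ha]
        field_simp
      nlinarith
    · have hσmS1 : σm * S1 = (μ + β + ρ) * (R0 - p + q - √D1) / 2 := by
        rw [hS1]
        field_simp
      have hroot := smaller_root_le_two_of_add_one_le hq1 hpM hR0
      rw [← hD1] at hroot
      nlinarith
  linarith [div_pos hA hS1pos]

/-- Under the capacity condition, if `0 < S1 < a`, then
`A/S1 − σm·S1 + μ + β + ρ > 0`. -/
theorem stmt18 (A μ ρ r β σm σs CI : ℝ)
    (hA : 0 < A) (hμ : 0 < μ) (hρ : 0 < ρ) (hr : 0 < r) (hβ : 0 < β)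
    (hσm : 0 < σm) (hσs : 0 < σs) (hCI : 0 < CI)
    (R0 p q M : ℝ)
    (hR0 : R0 = A * σm / (μ * (μ + β + ρ)))
    (hp : p = (μ + r) * σm * σs * CI / (μ * (μ * σm + β * σs)))
    (hq : q = μ * σm / (μ * σm + β * σs))
    (hM : M = σm * (μ + r) * CI / (μ * β))
    (hsmall : CI < β * A / ((μ + r) * (μ + r + ρ)))
    (D1 : ℝ) (hD1 : D1 = (R0 - p - q) ^ 2 - 4 * p * q) (hD1pos : 0 < D1)
    (S1 : ℝ) (hS1 : S1 = (μ + β + ρ) / (2 * σm) * (R0 - p + q - Real.sqrt D1))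
    (a : ℝ) (ha : a = (μ + β + ρ) / σm * (R0 - M))
    (hS1pos : 0 < S1) (hS1a : S1 < a) :
    0 < A / S1 - σm * S1 + μ + β + ρ :=
  stmt18_general A μ ρ r β σm σs CI hA hμ hρ hβ hσm hσs R0 p q M hp hq hM D1 hD1 S1 hS1 a ha hS1pos
    hS1a
end

section
/- Suppose u := R0 − 1 − p + q > 0 and let b = (μ+β+ρ)·R0·q/(σm·u). Then f(b) = ((μ+β+ρ)/σm)²·q·(q−1)·R0·(R0 − 1 − M)/u². In particular, since 0 < q < 1, if R0 > 1 + M then f(b) < 0. -/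
/-- The value of `f` at `b = (μ+β+ρ)·R0·q/(σm·u)` where
`u = R0 − 1 − p + q > 0`, and its negativity when `R0 > 1 + M`. -/
theorem stmt19 (A μ ρ r β σm σs CI : ℝ)
    (hA : 0 < A) (hμ : 0 < μ) (hρ : 0 < ρ) (hr : 0 < r) (hβ : 0 < β)
    (hσm : 0 < σm) (hσs : 0 < σs) (hCI : 0 < CI)
    (R0 p q M : ℝ)
    (hR0 : R0 = A * σm / (μ * (μ + β + ρ)))
    (hp : p = (μ + r) * σm * σs * CI / (μ * (μ * σm + β * σs)))
    (hq : q = μ * σm / (μ * σm + β * σs))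
    (hM : M = σm * (μ + r) * CI / (μ * β))
    (f : ℝ → ℝ)
    (hf : ∀ S, f S = S ^ 2 - (μ + β + ρ) / σm * (R0 - p + q) * S
      + ((μ + β + ρ) / σm) ^ 2 * q * R0)
    (u : ℝ) (hu : u = R0 - 1 - p + q) (hupos : 0 < u)
    (b : ℝ) (hb : b = (μ + β + ρ) * R0 * q / (σm * u)) :
    f b = ((μ + β + ρ) / σm) ^ 2 * q * (q - 1) * R0 * (R0 - 1 - M) / u ^ 2 ∧
    (R0 > 1 + M → f b < 0) := by
  have hden : (0:ℝ) < μ * σm + β * σs := by positivity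
  have hqpos : 0 < q := by rw [hq]; positivity
  have hq1 : q < 1 := by
    rw [hq, div_lt_one hden]; nlinarith
  have hR0pos : 0 < R0 := by rw [hR0]; positivity
  have hpM : p = M * (1 - q) := by
    rw [hp, hM, hq]; field_simp; ring
  have hsum : 0 < μ + β + ρ := by positivity
  have key : f b = ((μ + β + ρ) / σm) ^ 2 * q * (q - 1) * R0 * (R0 - 1 - M) / u ^ 2 := by
    subst hpM
    rw [hf, hb]
    have hune : u ≠ 0 := ne_of_gt hupos
    have hsne : σm ≠ 0 := ne_of_gt hσm
    subst hu
    field_simp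
    ring
  refine ⟨key, fun hgt => ?_⟩
  rw [key]
  have : ((μ + β + ρ) / σm) ^ 2 * q * (q - 1) * R0 * (R0 - 1 - M) < 0 := by
    have h1 : 0 < ((μ + β + ρ) / σm) ^ 2 * q * R0 := by positivity
    have h2 : 0 < R0 - 1 - M := by linarith
    nlinarith [mul_pos (mul_pos h1 h2) (show (0:ℝ) < 1 - q by linarith)]
  exact div_neg_of_neg_of_pos this (by positivity)
end
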